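/- arXiv:1711.00700 — 5 statements merged into one kernel-verified Lean document; each statement's English description precedes it below -/
import Mathlib

section
/- Let T = {(z,ζ) ∈ [0,1]² : 0 ≤ ζ ≤ z ≤ 1} and let P, P_I : T → ℝ^{n×n} be continuous matrix-valued kernels satisfying P(z,ζ) + ∫_ζ^z P_I(z,ζ')·P(ζ',ζ) dζ' = P_I(z,ζ) for all (z,ζ) ∈ T. Then the alternative reciprocity relation P(z,ζ) + ∫_ζ^z P(z,ζ')·P_I(ζ',ζ) dζ' = P_I(z,ζ) also holds for all (z,ζ) ∈ T. -/
/-!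
Write `P_I(z,ζ) - P(z,ζ) = ∫_ζ^z P_I(z,s) P(s,ζ) ds`. Substituting this relation into both
products of the defect `D(z) = ∫_ζ^z (P_I(z,u) P(u,ζ) - P(z,u) P_I(u,ζ)) du` and exchanging the
order of integration over the triangle `ζ ≤ u ≤ s ≤ z` gives the homogeneous Volterra equation
`D(z) = -∫_ζ^z P_I(z,s) D(s) ds`, so `D = 0` by Grönwall's inequality; `D(z) = 0` is the
alternative relation. The argument works for kernels with values in any real Banach algebra;
the kernels are first extended continuously from the triangle to the plane (Tietze), so that all
parametric integrals are integrals of continuous functions.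
-/

open MeasureTheory Set Function intervalIntegral

-- Any norm would do; the `L∞` operator norm makes the matrices a normed algebra.
attribute [local instance] Matrix.linftyOpNormedRing Matrix.linftyOpNormedAlgebra

universe u v

theorem ContinuousOn.exists_continuous_eqOn {X : Type u} {Y : Type v} [TopologicalSpace X]
    [NormalSpace X] [TopologicalSpace Y] [TietzeExtension.{u, v} Y] {s : Set X} {f : X → Y}
    (hs : IsClosed s) (hf : ContinuousOn f s) : ∃ g : X → Y, Continuous g ∧ EqOn g f s := by
  obtain ⟨g, hg⟩ := ContinuousMap.exists_restrict_eq hs ⟨s.domRestrict f, hf.domRestrict⟩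
  exact ⟨g, g.continuous, fun x hx => congr($hg ⟨x, hx⟩)⟩

def triangle (a b : ℝ) : Set (ℝ × ℝ) := {q | a ≤ q.2 ∧ q.2 ≤ q.1 ∧ q.1 ≤ b}

theorem isClosed_triangle (a b : ℝ) : IsClosed (triangle a b) :=
  (isClosed_le continuous_const continuous_snd).inter <|
    (isClosed_le continuous_snd continuous_fst).inter (isClosed_le continuous_fst continuous_const)

theorem mk_mem_triangle_of_mem_uIcc {a b z ζ s : ℝ} (hζ : a ≤ ζ) (hζz : ζ ≤ z) (hz : z ≤ b)
    (hs : s ∈ uIcc ζ z) : (z, s) ∈ triangle a b ∧ (s, ζ) ∈ triangle a b := by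
  rw [uIcc_of_le hζz] at hs
  exact ⟨⟨hζ.trans hs.1, hs.2, hz⟩, ⟨hζ, hs.1, hs.2.trans hz⟩⟩

theorem exists_continuous_eq_on_triangle {Y : Type u} [TopologicalSpace Y]
    [TietzeExtension.{0, u} Y] {F : ℝ → ℝ → Y} {a b : ℝ}
    (hF : ContinuousOn (uncurry F) (triangle a b)) :
    ∃ F' : ℝ → ℝ → Y, Continuous (uncurry F') ∧
      ∀ z ζ, (z, ζ) ∈ triangle a b → F' z ζ = F z ζ := by
  obtain ⟨g, hg, hgF⟩ := hF.exists_continuous_eqOn (isClosed_triangle a b)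
  exact ⟨curry g, by rwa [uncurry_curry], fun z ζ h => hgF h⟩

theorem intervalIntegral.integral_integral_triangle_swap {E : Type*} [NormedAddCommGroup E]
    [NormedSpace ℝ E] [CompleteSpace E] {f : ℝ → ℝ → E} (hf : Continuous (uncurry f))
    {a b : ℝ} (hab : a ≤ b) :
    ∫ x in a..b, ∫ y in a..x, f x y = ∫ y in a..b, ∫ x in y..b, f x y := by
  set G := {p : ℝ × ℝ | p.2 ≤ p.1}.indicator (uncurry f)
  have hG : Integrable G ((volume.restrict (Icc a b)).prod (volume.restrict (Icc a b))) := by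
    rw [Measure.prod_restrict, ← Measure.volume_eq_prod]
    exact (hf.continuousOn.integrableOn_compact (isCompact_Icc.prod isCompact_Icc)).indicator
      (measurableSet_le measurable_snd measurable_fst)
  have inner_left : ∀ x ∈ Icc a b, ∫ y in Icc a b, G (x, y) = ∫ y in a..x, f x y := by
    intro x hx
    have : ∀ y, G (x, y) = (Iic x).indicator (f x) y := fun y => by simp [G, indicator]
    rw [integral_of_le hx.1, ← integral_Icc_eq_integral_Ioc]
    simp_rw [this, setIntegral_indicator measurableSet_Iic]
    congr 2
    ext y
    simp only [mem_inter_iff, mem_Icc, mem_Iic]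
    exact ⟨fun h => ⟨h.1.1, h.2⟩, fun h => ⟨⟨h.1, h.2.trans hx.2⟩, h.2⟩⟩
  have inner_right : ∀ y ∈ Icc a b, ∫ x in Icc a b, G (x, y) = ∫ x in y..b, f x y := by
    intro y hy
    have : ∀ x, G (x, y) = (Ici y).indicator (f · y) x := fun x => by simp [G, indicator]
    rw [integral_of_le hy.2, ← integral_Icc_eq_integral_Ioc]
    simp_rw [this, setIntegral_indicator measurableSet_Ici]
    congr 2
    ext x
    simp only [mem_inter_iff, mem_Icc, mem_Ici]
    exact ⟨fun h => ⟨h.2, h.1.2⟩, fun h => ⟨⟨hy.1.trans h.1, h.2⟩, h.1⟩⟩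
  calc ∫ x in a..b, ∫ y in a..x, f x y = ∫ x in Icc a b, ∫ y in Icc a b, G (x, y) := by
        rw [integral_of_le hab, ← integral_Icc_eq_integral_Ioc]
        exact setIntegral_congr_fun measurableSet_Icc fun x hx => (inner_left x hx).symm
    _ = ∫ y in Icc a b, ∫ x in Icc a b, G (x, y) := integral_integral_swap hG
    _ = ∫ y in a..b, ∫ x in y..b, f x y := by
        rw [integral_of_le hab, ← integral_Icc_eq_integral_Ioc]
        exact setIntegral_congr_fun measurableSet_Icc inner_right

theorem intervalIntegral.continuous_parametric_intervalIntegral_of_continuous_limits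
    {E X : Type*} [NormedAddCommGroup E] [NormedSpace ℝ E] [TopologicalSpace X]
    {f : X → ℝ → E} (hf : Continuous (uncurry f)) {a b : X → ℝ} (ha : Continuous a)
    (hb : Continuous b) : Continuous fun x => ∫ t in a x..b x, f x t := by
  have hsplit : ∀ x, ∫ t in a x..b x, f x t = (∫ t in 0..b x, f x t) - ∫ t in 0..a x, f x t :=
    fun x => by
      have hfx : Continuous (f x) := hf.comp (continuous_const.prodMk continuous_id)
      exact (integral_interval_sub_left (hfx.intervalIntegrable _ _)
        (hfx.intervalIntegrable _ _)).symm
  simp_rw [hsplit]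
  exact (continuous_parametric_intervalIntegral_of_continuous hf hb).sub
    (continuous_parametric_intervalIntegral_of_continuous hf ha)

theorem eq_zero_of_norm_le_mul_integral_norm {E : Type*} [NormedAddCommGroup E] {D : ℝ → E}
    (hD : Continuous D) {C a b : ℝ} (hle : ∀ t ∈ Icc a b, ‖D t‖ ≤ C * ∫ s in a..t, ‖D s‖) :
    ∀ t ∈ Icc a b, D t = 0 := by
  have hF : ∀ t, HasDerivAt (fun t => ∫ s in a..t, ‖D s‖) ‖D t‖ t := fun t =>
    (hD.norm.integral_hasStrictDerivAt a t).hasDerivAt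
  have hF0 : ∀ t ∈ Icc a b, ∫ s in a..t, ‖D s‖ = 0 :=
    eq_zero_of_abs_deriv_le_mul_abs_self_of_eq_zero_right (K := |C|)
      (fun t _ => (hF t).continuousAt.continuousWithinAt) (fun t _ => (hF t).hasDerivWithinAt)
      integral_same fun t ht => by
        rw [norm_norm, Real.norm_eq_abs, ← abs_mul]
        exact (hle t (Ico_subset_Icc_self ht)).trans (le_abs_self _)
  intro t ht
  simpa [hF0 t ht] using hle t ht

theorem intervalIntegrable_mul_of_continuousOn_triangle {R : Type*} [NormedRing R]
    {F G : ℝ → ℝ → R} {a b z ζ : ℝ} (hF : ContinuousOn (uncurry F) (triangle a b))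
    (hG : ContinuousOn (uncurry G) (triangle a b))
    (hζ : a ≤ ζ) (hζz : ζ ≤ z) (hz : z ≤ b) :
    IntervalIntegrable (fun s => F z s * G s ζ) volume ζ z := by
  refine ContinuousOn.intervalIntegrable (ContinuousOn.mul ?_ ?_)
  · exact hF.comp (by fun_prop) fun s hs => (mk_mem_triangle_of_mem_uIcc hζ hζz hz hs).1
  · exact hG.comp (by fun_prop) fun s hs => (mk_mem_triangle_of_mem_uIcc hζ hζz hz hs).2

section BanachAlgebra

variable {R : Type u} [NormedRing R] [NormedAlgebra ℝ R]

theorem intervalIntegral.integral_const_mul_of_intervalIntegrable {f : ℝ → R} {a b : ℝ}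
    (hf : IntervalIntegrable f volume a b) (c : R) :
    ∫ x in a..b, c * f x = c * ∫ x in a..b, f x := by
  simp only [intervalIntegral, integral_const_mul_of_integrable hf.1,
    integral_const_mul_of_integrable hf.2, mul_sub]

theorem intervalIntegral.integral_mul_const_of_intervalIntegrable {f : ℝ → R} {a b : ℝ}
    (hf : IntervalIntegrable f volume a b) (c : R) :
    ∫ x in a..b, f x * c = (∫ x in a..b, f x) * c := by
  simp only [intervalIntegral, integral_mul_const_of_integrable hf.1,
    integral_mul_const_of_integrable hf.2, sub_mul]

theorem eq_zero_of_eq_neg_integral_mul {K : ℝ → ℝ → R} (hK : Continuous (uncurry K))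
    {D : ℝ → R} (hD : Continuous D) {a b : ℝ}
    (hKD : ∀ t ∈ Icc a b, D t = -∫ s in a..t, K t s * D s) : ∀ t ∈ Icc a b, D t = 0 := by
  obtain ⟨M, hM⟩ := (isCompact_Icc.prod isCompact_Icc).exists_bound_of_continuousOn
    (hK.continuousOn (s := Icc a b ×ˢ Icc a b))
  refine eq_zero_of_norm_le_mul_integral_norm hD (C := M) fun t ht => ?_
  rw [hKD t ht, norm_neg, ← intervalIntegral.integral_const_mul]
  refine norm_integral_le_of_norm_le ht.1 (Filter.Eventually.of_forall fun s hs => ?_)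
    ((continuous_const.mul hD.norm).intervalIntegrable _ _)
  have hts : (t, s) ∈ Icc a b ×ˢ Icc a b := ⟨ht, hs.1.le, hs.2.trans ht.2⟩
  exact (norm_mul_le _ _).trans (mul_le_mul_of_nonneg_right (hM _ hts) (norm_nonneg _))

theorem integral_mul_congr_of_eq_on_triangle {F G F' G' : ℝ → ℝ → R} {a b z ζ : ℝ}
    (hF : ∀ z ζ, (z, ζ) ∈ triangle a b → F z ζ = F' z ζ)
    (hG : ∀ z ζ, (z, ζ) ∈ triangle a b → G z ζ = G' z ζ)
    (hζ : a ≤ ζ) (hζz : ζ ≤ z) (hz : z ≤ b) :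
    ∫ s in ζ..z, F z s * G s ζ = ∫ s in ζ..z, F' z s * G' s ζ :=
  integral_congr fun s hs => by
    obtain ⟨hzs, hsζ⟩ := mk_mem_triangle_of_mem_uIcc hζ hζz hz hs
    rw [hF z s hzs, hG s ζ hsζ]

variable {P PI : ℝ → ℝ → R}

noncomputable def reciprocityDefect (P PI : ℝ → ℝ → R) (ζ z : ℝ) : R :=
  ∫ u in ζ..z, (PI z u * P u ζ - P z u * PI u ζ)

theorem continuous_reciprocityDefect (hP : Continuous (uncurry P))
    (hPI : Continuous (uncurry PI)) (ζ : ℝ) : Continuous (reciprocityDefect P PI ζ) :=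
  continuous_parametric_intervalIntegral_of_continuous (by fun_prop) continuous_id

theorem reciprocityDefect_integrand_eq (hP : Continuous (uncurry P))
    (hPI : Continuous (uncurry PI)) {a b : ℝ}
    (hrec : ∀ z ζ, a ≤ ζ → ζ ≤ z → z ≤ b → P z ζ + ∫ s in ζ..z, PI z s * P s ζ = PI z ζ)
    {ζ z u : ℝ} (hζ : a ≤ ζ) (hζz : ζ ≤ z) (hz : z ≤ b) (hu : u ∈ uIcc ζ z) :
    PI z u * P u ζ - P z u * PI u ζ
      = (∫ s in u..z, PI z s * P s u * PI u ζ) - ∫ s in ζ..u, PI z u * (PI u s * P s ζ) := by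
  rw [uIcc_of_le hζz] at hu
  have hPuζ := eq_sub_of_add_eq (hrec u ζ hζ hu.1 (hu.2.trans hz))
  have hPzu := eq_sub_of_add_eq (hrec z u (hζ.trans hu.1) hu.2 hz)
  rw [integral_const_mul_of_intervalIntegrable
      ((by fun_prop : Continuous fun s => PI u s * P s ζ).intervalIntegrable _ _),
    integral_mul_const_of_intervalIntegrable
      ((by fun_prop : Continuous fun s => PI z s * P s u).intervalIntegrable _ _),
    hPuζ, hPzu]
  noncomm_ring

variable [CompleteSpace R]

theorem reciprocityDefect_eq_neg_integral (hP : Continuous (uncurry P))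
    (hPI : Continuous (uncurry PI)) {a b : ℝ}
    (hrec : ∀ z ζ, a ≤ ζ → ζ ≤ z → z ≤ b → P z ζ + ∫ s in ζ..z, PI z s * P s ζ = PI z ζ)
    {ζ z : ℝ} (hζ : a ≤ ζ) (hζz : ζ ≤ z) (hz : z ≤ b) :
    reciprocityDefect P PI ζ z = -∫ s in ζ..z, PI z s * reciprocityDefect P PI ζ s := by
  set g₁ : ℝ → ℝ → R := fun s u => PI z s * (PI s u * P u ζ)
  set g₂ : ℝ → ℝ → R := fun s u => PI z s * P s u * PI u ζ
  have hg₁ : Continuous (uncurry g₁) := by fun_prop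
  have hg₂ : Continuous (uncurry g₂) := by fun_prop
  have hI₁ : Continuous fun u => ∫ s in ζ..u, g₁ u s :=
    continuous_parametric_intervalIntegral_of_continuous hg₁ continuous_id
  have hI₂ : Continuous fun u => ∫ s in u..z, g₂ s u :=
    continuous_parametric_intervalIntegral_of_continuous_limits (f := fun u s => g₂ s u)
      (by fun_prop) continuous_id continuous_const
  have inner : ∀ s, (∫ u in ζ..s, g₂ s u) - ∫ u in ζ..s, g₁ s u
      = -(PI z s * reciprocityDefect P PI ζ s) := fun s => by
    have hcont : Continuous fun u => PI s u * P u ζ - P s u * PI u ζ := by fun_prop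
    rw [reciprocityDefect,
      ← integral_const_mul_of_intervalIntegrable (hcont.intervalIntegrable _ _),
      ← intervalIntegral.integral_neg, ← intervalIntegral.integral_sub
        ((by fun_prop : Continuous (g₂ s)).intervalIntegrable _ _)
        ((by fun_prop : Continuous (g₁ s)).intervalIntegrable _ _)]
    congr 1
    ext u
    simp only [g₁, g₂]
    noncomm_ring
  calc reciprocityDefect P PI ζ z
      = ∫ u in ζ..z, ((∫ s in u..z, g₂ s u) - ∫ s in ζ..u, g₁ u s) :=
        integral_congr fun u hu => reciprocityDefect_integrand_eq hP hPI hrec hζ hζz hz hu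
    _ = (∫ u in ζ..z, ∫ s in u..z, g₂ s u) - ∫ u in ζ..z, ∫ s in ζ..u, g₁ u s :=
        integral_sub (hI₂.intervalIntegrable _ _) (hI₁.intervalIntegrable _ _)
    _ = (∫ s in ζ..z, ∫ u in ζ..s, g₂ s u) - ∫ s in ζ..z, ∫ u in ζ..s, g₁ s u := by
        rw [integral_integral_triangle_swap hg₂ hζz]
    _ = ∫ s in ζ..z, -(PI z s * reciprocityDefect P PI ζ s) := by
        simp_rw [← inner]
        exact (integral_sub ((continuous_parametric_intervalIntegral_of_continuous hg₂
          continuous_id).intervalIntegrable _ _) (hI₁.intervalIntegrable _ _)).symm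
    _ = -∫ s in ζ..z, PI z s * reciprocityDefect P PI ζ s := intervalIntegral.integral_neg

theorem reciprocity_symm (hP : Continuous (uncurry P)) (hPI : Continuous (uncurry PI))
    {a b : ℝ}
    (hrec : ∀ z ζ, a ≤ ζ → ζ ≤ z → z ≤ b → P z ζ + ∫ s in ζ..z, PI z s * P s ζ = PI z ζ)
    {z ζ : ℝ} (hζ : a ≤ ζ) (hζz : ζ ≤ z) (hz : z ≤ b) :
    P z ζ + ∫ s in ζ..z, P z s * PI s ζ = PI z ζ := by
  have hD : reciprocityDefect P PI ζ z = 0 :=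
    eq_zero_of_eq_neg_integral_mul hPI (continuous_reciprocityDefect hP hPI ζ)
      (fun t ht => reciprocityDefect_eq_neg_integral hP hPI hrec hζ ht.1 ht.2) z ⟨hζz, hz⟩
  rw [reciprocityDefect, intervalIntegral.integral_sub
    ((by fun_prop : Continuous fun u => PI z u * P u ζ).intervalIntegrable _ _)
    ((by fun_prop : Continuous fun u => P z u * PI u ζ).intervalIntegrable _ _),
    sub_eq_zero] at hD
  rw [← hD]
  exact hrec z ζ hζ hζz hz

theorem reciprocity_symm_of_continuousOn [TietzeExtension.{0, u} R] {a b : ℝ}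
    (hP : ContinuousOn (uncurry P) (triangle a b))
    (hPI : ContinuousOn (uncurry PI) (triangle a b))
    (hrec : ∀ z ζ, a ≤ ζ → ζ ≤ z → z ≤ b → P z ζ + ∫ s in ζ..z, PI z s * P s ζ = PI z ζ)
    {z ζ : ℝ} (hζ : a ≤ ζ) (hζz : ζ ≤ z) (hz : z ≤ b) :
    P z ζ + ∫ s in ζ..z, P z s * PI s ζ = PI z ζ := by
  obtain ⟨A, hA, hAP⟩ := exists_continuous_eq_on_triangle hP
  obtain ⟨B, hB, hBPI⟩ := exists_continuous_eq_on_triangle hPI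
  have hrecAB : ∀ z ζ, a ≤ ζ → ζ ≤ z → z ≤ b → A z ζ + ∫ s in ζ..z, B z s * A s ζ = B z ζ :=
    fun z ζ hζ hζz hz => by
      rw [integral_mul_congr_of_eq_on_triangle hBPI hAP hζ hζz hz, hAP z ζ ⟨hζ, hζz, hz⟩,
        hBPI z ζ ⟨hζ, hζz, hz⟩]
      exact hrec z ζ hζ hζz hz
  have := reciprocity_symm hA hB hrecAB hζ hζz hz
  rwa [integral_mul_congr_of_eq_on_triangle hAP hBPI hζ hζz hz, hAP z ζ ⟨hζ, hζz, hz⟩,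
    hBPI z ζ ⟨hζ, hζz, hz⟩] at this

end BanachAlgebra

theorem Matrix.intervalIntegral_mul_apply_of_continuousOn_triangle {ι : Type*} [Fintype ι]
    [DecidableEq ι] {F G : ℝ → ℝ → Matrix ι ι ℝ} {a b z ζ : ℝ}
    (hF : ContinuousOn (uncurry F) (triangle a b))
    (hG : ContinuousOn (uncurry G) (triangle a b)) (hζ : a ≤ ζ) (hζz : ζ ≤ z) (hz : z ≤ b)
    (i j : ι) :
    (∫ s in ζ..z, F z s * G s ζ) i j = ∫ s in ζ..z, (F z s * G s ζ) i j :=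
  ((LinearMap.toContinuousLinearMap (Matrix.entryLinearMap ℝ ℝ i j)).intervalIntegral_comp_comm
    (intervalIntegrable_mul_of_continuousOn_triangle hF hG hζ hζz hz)).symm

/-- Let `P, P_I` be continuous `n × n`-matrix-valued kernels on the triangle
`T = {(z,ζ) : 0 ≤ ζ ≤ z ≤ 1}` satisfying
`P z ζ + ∫_ζ^z P_I z ζ' * P ζ' ζ dζ' = P_I z ζ` on `T`. Then the alternative reciprocity
relation `P z ζ + ∫_ζ^z P z ζ' * P_I ζ' ζ dζ' = P_I z ζ` also holds on `T`. -/
theorem statement8 (n : ℕ)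
    (P PI : ℝ → ℝ → Matrix (Fin n) (Fin n) ℝ)
    (hPcont : ∀ i j, ContinuousOn (fun q : ℝ × ℝ => P q.1 q.2 i j)
      {q : ℝ × ℝ | 0 ≤ q.2 ∧ q.2 ≤ q.1 ∧ q.1 ≤ 1})
    (hPIcont : ∀ i j, ContinuousOn (fun q : ℝ × ℝ => PI q.1 q.2 i j)
      {q : ℝ × ℝ | 0 ≤ q.2 ∧ q.2 ≤ q.1 ∧ q.1 ≤ 1})
    (hrec : ∀ z ζ : ℝ, 0 ≤ ζ → ζ ≤ z → z ≤ 1 → ∀ i j,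
      P z ζ i j + ∫ ζ' in ζ..z, (PI z ζ' * P ζ' ζ) i j = PI z ζ i j) :
    ∀ z ζ : ℝ, 0 ≤ ζ → ζ ≤ z → z ≤ 1 → ∀ i j,
      P z ζ i j + ∫ ζ' in ζ..z, (P z ζ' * PI ζ' ζ) i j = PI z ζ i j := by
  have hP : ContinuousOn (uncurry P) (triangle 0 1) :=
    continuousOn_pi.2 fun i => continuousOn_pi.2 (hPcont i)
  have hPI : ContinuousOn (uncurry PI) (triangle 0 1) :=
    continuousOn_pi.2 fun i => continuousOn_pi.2 (hPIcont i)
  have hrec' : ∀ z ζ : ℝ, 0 ≤ ζ → ζ ≤ z → z ≤ 1 →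
      P z ζ + ∫ s in ζ..z, PI z s * P s ζ = PI z ζ := fun z ζ hζ hζz hz => by
    ext i j
    rw [Matrix.add_apply,
      Matrix.intervalIntegral_mul_apply_of_continuousOn_triangle hPI hP hζ hζz hz]
    exact hrec z ζ hζ hζz hz i j
  intro z ζ hζ hζz hz i j
  rw [← Matrix.intervalIntegral_mul_apply_of_continuousOn_triangle hP hPI hζ hζz hz,
    ← Matrix.add_apply, reciprocity_symm_of_continuousOn hP hPI hrec' hζ hζz hz]
end

section
/- Let λ_i, λ_j : [0,1] → ℝ be continuously differentiable with λ_i(z) > 0 and λ_j(z) > 0 on [0,1], set φ_i(z) = ∫₀^z dζ/λ_i(ζ) and φ_j(z) = ∫₀^z dζ/λ_j(ζ), and let f : [0,1] → ℝ be continuously differentiable. On the region D = {(z,ζ) ∈ [0,1]² : 0 ≤ φ_i(z) − φ_j(ζ) ≤ φ_i(1)}, define σ(z,ζ) = φ_i⁻¹(φ_i(z) − φ_j(ζ)) and p(z,ζ) = f(σ(z,ζ))/λ_j(ζ). Then: (i) at every interior point of D the partial derivatives of p exist and satisfy the transport equation λ_i(z)·∂_z p(z,ζ) + ∂_ζ(p(z,ζ)·λ_j(ζ))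 = 0; and (ii) for every z ∈ [0,1], σ(z,0) = z and p(z,0)·λ_j(0) = f(z). -/
/-!
By the fundamental theorem of calculus `φᵢ' = 1 / λᵢ` and `φⱼ' = 1 / λⱼ` on `(0, 1)`, and the
inverse `φᵢ⁻¹` of the strictly increasing `φᵢ` is differentiable inside `(0, φᵢ 1)`. Since
`p λⱼ = f ∘ σ` is a function of `u = φᵢ z − φⱼ ζ` alone, the chain rule gives
`λᵢ ∂_z p = (f ∘ φᵢ⁻¹)'(u) / λⱼ(ζ) = −∂_ζ (p λⱼ)`. At an interior point of `D` both coordinates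
lie in `(0, 1)`, and `u` lies in `(0, φᵢ 1)` because `u` is strictly increasing in `z` while
staying in `[0, φᵢ 1]` nearby.
-/

open Set Filter Topology intervalIntegral

section IntegralOfContinuous

variable {g : ℝ → ℝ} {a b : ℝ}

theorem hasDerivAt_integral_of_continuousOn_Icc (hg : ContinuousOn g (Icc a b)) {x : ℝ}
    (hx : x ∈ Ioo a b) : HasDerivAt (fun u => ∫ t in a..u, g t) (g x) x :=
  integral_hasDerivAt_right
    ((hg.mono (Icc_subset_Icc_right hx.2.le)).intervalIntegrable_of_Icc hx.1.le)
    ((hg.mono Ioo_subset_Icc_self).stronglyMeasurableAtFilter isOpen_Ioo x hx)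
    (hg.continuousAt (Icc_mem_nhds hx.1 hx.2))

theorem strictMonoOn_integral_of_pos (hg : ContinuousOn g (Icc a b))
    (hpos : ∀ t ∈ Icc a b, 0 < g t) : StrictMonoOn (fun u => ∫ t in a..u, g t) (Icc a b) := by
  intro x hx y hy hxy
  have hint : ∀ {c d}, c ∈ Icc a b → d ∈ Icc a b → IntervalIntegrable g MeasureTheory.volume c d :=
    fun hc hd => (hg.mono (uIcc_subset_Icc hc hd)).intervalIntegrable
  have hxy_pos : 0 < ∫ t in x..y, g t :=
    intervalIntegral_pos_of_pos_on (hint hx hy)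
      (fun t ht => hpos t ⟨hx.1.trans ht.1.le, ht.2.le.trans hy.2⟩) hxy
  simp only [← integral_add_adjacent_intervals (hint (left_mem_Icc.2 (hx.1.trans hx.2)) hx)
    (hint hx hy)]
  linarith

end IntegralOfContinuous

section Inverse

variable {φ ψ : ℝ → ℝ} {a b y : ℝ}

theorem inverse_mem_Ioo (hφψ : ∀ y ∈ Icc (φ a) (φ b), ψ y ∈ Icc a b ∧ φ (ψ y) = y)
    (hy : y ∈ Ioo (φ a) (φ b)) : ψ y ∈ Ioo a b := by
  obtain ⟨hmem, hφψy⟩ := hφψ y (Ioo_subset_Icc_self hy)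
  refine ⟨hmem.1.lt_of_ne fun h => ?_, hmem.2.lt_of_ne fun h => ?_⟩
  · rw [← h] at hφψy; exact hy.1.ne hφψy
  · rw [h] at hφψy; exact hy.2.ne' hφψy

theorem strictMonoOn_inverse (hφ : StrictMonoOn φ (Icc a b))
    (hφψ : ∀ y ∈ Icc (φ a) (φ b), ψ y ∈ Icc a b ∧ φ (ψ y) = y) :
    StrictMonoOn ψ (Icc (φ a) (φ b)) := fun y₁ h₁ y₂ h₂ h =>
  (hφ.lt_iff_lt (hφψ y₁ h₁).1 (hφψ y₂ h₂).1).1 (by rwa [(hφψ y₁ h₁).2, (hφψ y₂ h₂).2])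

theorem hasDerivAt_inverse (hφ : StrictMonoOn φ (Icc a b))
    (hψφ : ∀ x ∈ Icc a b, ψ (φ x) = x)
    (hφψ : ∀ y ∈ Icc (φ a) (φ b), ψ y ∈ Icc a b ∧ φ (ψ y) = y) (hy : y ∈ Ioo (φ a) (φ b))
    {φ' : ℝ} (hd : HasDerivAt φ φ' (ψ y)) (hφ' : φ' ≠ 0) : HasDerivAt ψ φ'⁻¹ y := by
  have hx := inverse_mem_Ioo hφψ hy
  have hab : a ≤ b := hx.1.le.trans hx.2.le
  have himage : Icc a b ⊆ ψ '' Icc (φ a) (φ b) := fun x hx' =>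
    ⟨φ x, ⟨hφ.monotoneOn (left_mem_Icc.2 hab) hx' hx'.1,
      hφ.monotoneOn hx' (right_mem_Icc.2 hab) hx'.2⟩, hψφ x hx'⟩
  have hcont : ContinuousAt ψ y :=
    (strictMonoOn_inverse hφ hφψ).continuousAt_of_image_mem_nhds
      (Icc_mem_nhds hy.1 hy.2) (mem_of_superset (Icc_mem_nhds hx.1 hx.2) himage)
  exact hd.of_local_left_inverse hcont hφ'
    (mem_of_superset (Icc_mem_nhds hy.1 hy.2) fun y' hy' => (hφψ y' hy').2)

end Inverse

theorem StrictMonoOn.mem_Ioo_of_eventually_mem_Icc {α β : Type*} [LinearOrder α]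
    [TopologicalSpace α] [OrderTopology α] [DenselyOrdered α] [NoMinOrder α] [NoMaxOrder α]
    [Preorder β] {g : α → β} {s : Set α} {x : α} {c d : β} (hg : StrictMonoOn g s) (hs : s ∈ 𝓝 x)
    (h : ∀ᶠ y in 𝓝 x, g y ∈ Icc c d) : g x ∈ Ioo c d := by
  have hx := mem_of_mem_nhds hs
  have hnear : ∀ᶠ y in 𝓝 x, y ∈ s ∧ g y ∈ Icc c d := Filter.inter_mem hs h
  obtain ⟨y, ⟨hys, hy⟩, hyx⟩ :=
    ((hnear.filter_mono nhdsWithin_le_nhds).and (eventually_mem_nhdsWithin (s := Iio x))).exists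
  obtain ⟨y', ⟨hys', hy'⟩, hxy'⟩ :=
    ((hnear.filter_mono nhdsWithin_le_nhds).and (eventually_mem_nhdsWithin (s := Ioi x))).exists
  exact ⟨hy.1.trans_lt (hg hys hx hyx), (hg hx hys' hxy').trans_le hy'.2⟩

theorem mem_Ioo_of_mem_interior {φ χ : ℝ → ℝ} {a b a' b' c d : ℝ}
    (hφ : StrictMonoOn φ (Icc a b)) {q : ℝ × ℝ}
    (hq : q ∈ interior {q : ℝ × ℝ | q.1 ∈ Icc a b ∧ q.2 ∈ Icc a' b' ∧
      c ≤ φ q.1 - χ q.2 ∧ φ q.1 - χ q.2 ≤ d}) :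
    q.1 ∈ Ioo a b ∧ q.2 ∈ Ioo a' b' ∧ φ q.1 - χ q.2 ∈ Ioo c d := by
  have hbox : q ∈ Ioo a b ×ˢ Ioo a' b' := by
    rw [← interior_Icc, ← interior_Icc, ← interior_prod_eq]
    exact interior_mono (fun _ hq => ⟨hq.1, hq.2.1⟩ : _ ⊆ Icc a b ×ˢ Icc a' b') hq
  have hslice : ∀ᶠ z in 𝓝 q.1, c ≤ φ z - χ q.2 ∧ φ z - χ q.2 ≤ d :=
    mem_of_superset ((Continuous.prodMk_left q.2).continuousAt.preimage_mem_nhds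
      (mem_interior_iff_mem_nhds.1 hq)) fun _ hz => hz.2.2
  exact ⟨hbox.1, hbox.2, StrictMonoOn.mem_Ioo_of_eventually_mem_Icc (g := fun z => φ z - χ q.2)
    (fun x hx y hy h => sub_lt_sub_right (hφ hx hy h) _) (Icc_mem_nhds hbox.1.1 hbox.1.2) hslice⟩

theorem transport_equation_of_hasDerivAt {lami lamj φi φj ψ f : ℝ → ℝ} {z ζ c f' : ℝ}
    (hφi : HasDerivAt φi (1 / lami z) z) (hφj : HasDerivAt φj (1 / lamj ζ) ζ)
    (hψ : HasDerivAt ψ c (φi z - φj ζ)) (hf : HasDerivAt f f' (ψ (φi z - φj ζ)))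
    (hlami : lami z ≠ 0) (hlamj : ∀ᶠ ζ' in 𝓝 ζ, lamj ζ' ≠ 0) :
    ∃ pz pζ : ℝ,
      HasDerivAt (fun z' => f (ψ (φi z' - φj ζ)) / lamj ζ) pz z ∧
      HasDerivAt (fun ζ' => f (ψ (φi z - φj ζ')) / lamj ζ' * lamj ζ') pζ ζ ∧
      lami z * pz + pζ = 0 := by
  refine ⟨_, _, (hf.comp z (hψ.comp z (hφi.sub_const (φj ζ)))).div_const (lamj ζ),
    (hf.comp ζ (hψ.comp ζ (hφj.const_sub (φi z)))).congr_of_eventuallyEq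
      (hlamj.mono fun ζ' h => div_mul_cancel₀ _ h), ?_⟩
  field_simp
  ring

/-- For continuously differentiable positive `lami, lamj` on `[0,1]` with
`φi z = ∫₀^z dζ / lami ζ`, `φj z = ∫₀^z dζ / lamj ζ`, inverse `ψ` of `φi`, and `f` continuously
differentiable, on `D = {(z,ζ) ∈ [0,1]² : 0 ≤ φi z − φj ζ ≤ φi 1}` define
`σ z ζ = ψ (φi z − φj ζ)` and `p z ζ = f (σ z ζ) / lamj ζ`. Then (i) at every interior point
of `D` the partial derivatives of `p` exist and satisfy
`lami z * ∂_z p z ζ + ∂_ζ (p z ζ * lamj ζ) = 0`; and (ii) for every `z ∈ [0,1]`,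
`σ z 0 = z` and `p z 0 * lamj 0 = f z`. -/
theorem statement9 (lami lamj : ℝ → ℝ)
    (hlami : ContDiffOn ℝ 1 lami (Set.Icc 0 1))
    (hlamj : ContDiffOn ℝ 1 lamj (Set.Icc 0 1))
    (hposi : ∀ z ∈ Set.Icc (0:ℝ) 1, 0 < lami z)
    (hposj : ∀ z ∈ Set.Icc (0:ℝ) 1, 0 < lamj z)
    (φi φj : ℝ → ℝ)
    (hφi : ∀ z, φi z = ∫ ζ in (0:ℝ)..z, 1 / lami ζ)
    (hφj : ∀ z, φj z = ∫ ζ in (0:ℝ)..z, 1 / lamj ζ)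
    (ψ : ℝ → ℝ)
    (hψ₁ : ∀ z ∈ Set.Icc (0:ℝ) 1, ψ (φi z) = z)
    (hψ₂ : ∀ y ∈ Set.Icc (0:ℝ) (φi 1), ψ y ∈ Set.Icc (0:ℝ) 1 ∧ φi (ψ y) = y)
    (f : ℝ → ℝ)
    (hf : ContDiffOn ℝ 1 f (Set.Icc 0 1))
    (σ : ℝ → ℝ → ℝ) (hσ : ∀ z ζ, σ z ζ = ψ (φi z - φj ζ))
    (p : ℝ → ℝ → ℝ) (hp : ∀ z ζ, p z ζ = f (σ z ζ) / lamj ζ) :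
    (∀ q ∈ interior {q : ℝ × ℝ | q.1 ∈ Set.Icc (0:ℝ) 1 ∧ q.2 ∈ Set.Icc (0:ℝ) 1 ∧
        0 ≤ φi q.1 - φj q.2 ∧ φi q.1 - φj q.2 ≤ φi 1},
      ∃ pz pζ : ℝ,
        HasDerivAt (fun z => p z q.2) pz q.1 ∧
        HasDerivAt (fun ζ => p q.1 ζ * lamj ζ) pζ q.2 ∧
        lami q.1 * pz + pζ = 0) ∧
    (∀ z ∈ Set.Icc (0:ℝ) 1, σ z 0 = z ∧ p z 0 * lamj 0 = f z) := by
  have hgi : ContinuousOn (fun t => 1 / lami t) (Icc 0 1) :=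
    continuousOn_const.div hlami.continuousOn fun t ht => (hposi t ht).ne'
  have hgj : ContinuousOn (fun t => 1 / lamj t) (Icc 0 1) :=
    continuousOn_const.div hlamj.continuousOn fun t ht => (hposj t ht).ne'
  have hφi_deriv : ∀ x ∈ Ioo (0:ℝ) 1, HasDerivAt φi (1 / lami x) x := by
    rw [funext hφi]; exact fun x => hasDerivAt_integral_of_continuousOn_Icc hgi
  have hφj_deriv : ∀ x ∈ Ioo (0:ℝ) 1, HasDerivAt φj (1 / lamj x) x := by
    rw [funext hφj]; exact fun x => hasDerivAt_integral_of_continuousOn_Icc hgj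
  have hφi_mono : StrictMonoOn φi (Icc 0 1) := by
    rw [funext hφi]; exact strictMonoOn_integral_of_pos hgi fun t ht => one_div_pos.2 (hposi t ht)
  have hφi_zero : φi 0 = 0 := by simp [hφi]
  have hφψ : ∀ y ∈ Icc (φi 0) (φi 1), ψ y ∈ Icc 0 1 ∧ φi (ψ y) = y := by rwa [hφi_zero]
  refine ⟨fun q hq => ?_, fun z hz => ?_⟩
  · obtain ⟨hz, hζ, hu⟩ := mem_Ioo_of_mem_interior hφi_mono hq
    rw [← hφi_zero] at hu
    have hx := inverse_mem_Ioo hφψ hu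
    simp only [hp, hσ]
    exact transport_equation_of_hasDerivAt (hφi_deriv _ hz) (hφj_deriv _ hζ)
      (hasDerivAt_inverse hφi_mono hψ₁ hφψ hu (hφi_deriv _ hx)
        (one_div_pos.2 (hposi _ (Ioo_subset_Icc_self hx))).ne')
      ((hf.differentiableOn one_ne_zero).differentiableAt (Icc_mem_nhds hx.1 hx.2)).hasDerivAt
      (hposi _ (Ioo_subset_Icc_self hz)).ne'
      (mem_of_superset (Icc_mem_nhds hζ.1 hζ.2) fun ζ' h => (hposj ζ' h).ne')
  · have hσ0 : σ z 0 = z := by rw [hσ, show φj 0 = 0 by simp [hφj], sub_zero, hψ₁ z hz]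
    exact ⟨hσ0, by rw [hp, hσ0, div_mul_cancel₀ _ (hposj 0 ⟨le_rfl, zero_le_one⟩).ne']⟩
end

section
/- (Constructive solution of the N_I initial value problem.) Under the hypotheses of the previous statement, write λ_k(z) for the k-th diagonal entry of Λ(z) and φ_k(z) = ∫₀^z dζ/λ_k(ζ), set Ψ_k(z,ζ) = exp((φ_k(z) − φ_k(ζ))·F_c), A₁(z) = E₁ᵀA₀(z), A₂(z) = E₂ᵀA₀(z), and denote by e_i the i-th standard unit (column) vector. Define row vectors ν_iᵀ(z) = −e_iᵀK·Ψ_i(z,0) + ∫₀^z (1/λ_i(ζ))·e_iᵀ(A₁(ζ)K − E₁ᵀG(ζ))·Ψ_i(z,ζ) dζ for i = 1,…,p, and μ_iᵀ(z) = e_iᵀ(C₂ − Q₀K)·Ψ_{i+p}(z,0) + ∫₀^z (1/λ_{i+p}(ζ))·e_iᵀ(A₂(ζ)K − E₂ᵀG(ζ))·Ψ_{i+p}(z,ζ) dζ for i = 1,…,m. Then the matrix function N_I(z) whose first p rows are ν_1ᵀ(z),…,ν_pᵀ(z) and whose last m rows are μ_1ᵀ(z),…,μ_mᵀ(z) satisfies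 Λ(z)·N_I'(z) − N_I(z)·F_c = −A₀(z)·E₁ᵀN_I(0) − G(z) on [0,1] with E₁ᵀN_I(0) = −K and (E₂ᵀ − Q₀E₁ᵀ)N_I(0) = C₂. -/
/-!
Each row of `N_I` is the variation-of-constants formula for the linear ODE
`λ_i r' = b_i + r F_c`, `b_i` the `i`-th row of `A₀ K − G`: since `φ_i' = 1/λ_i`, the row equals
`(c_i + ∫₀^z (1/λ_i) b_i e^{−φ_i F_c}) e^{φ_i(z) F_c}`, and the product rule gives the ODE.
At `z = 0` the integral vanishes, so `N_I(0)` has rows `−K` and `C₂ − Q₀K`; this yields both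
boundary conditions and turns `A₀K − G` into `−A₀ E₁ᵀ N_I(0) − G`.
-/

open Matrix MeasureTheory Set

theorem ContinuousOn.hasDerivWithinAt_integral_Icc {E : Type*} [NormedAddCommGroup E]
    [NormedSpace ℝ E] [CompleteSpace E] {f : ℝ → E} {a b t₀ t : ℝ}
    (hf : ContinuousOn f (Icc a b)) (ht₀ : t₀ ∈ Icc a b) (ht : t ∈ Icc a b) :
    HasDerivWithinAt (fun u => ∫ x in t₀..u, f x) (f t) (Icc a b) t := by
  have : Fact (t ∈ Icc a b) := ⟨ht⟩
  exact intervalIntegral.integral_hasDerivWithinAt_right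
    ((hf.mono (uIcc_subset_Icc ht₀ ht)).intervalIntegrable)
    (hf.stronglyMeasurableAtFilter_nhdsWithin measurableSet_Icc t) (hf t ht)

theorem Matrix.transpose_mul_apply_of_eq_ite {ι κ ν R : Type*} [Fintype ι] [DecidableEq ι]
    [NonAssocSemiring R] {E : Matrix ι κ R} {e : κ → ι}
    (hE : ∀ i j, E i j = if i = e j then 1 else 0) (M : Matrix ι ν R) (a : κ) :
    (Eᵀ * M) a = M (e a) := by
  ext x
  simp [mul_apply, hE]

section Calculus

variable {ι κ : Type*} [Fintype ι]

theorem HasDerivWithinAt.vecMul [Fintype κ] {w : ℝ → ι → ℝ} {M : ℝ → Matrix ι κ ℝ}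
    {w' : ι → ℝ} {M' : Matrix ι κ ℝ} {s : Set ℝ} {z : ℝ} (hw : HasDerivWithinAt w w' s z)
    (hM : ∀ k j, HasDerivWithinAt (fun t => M t k j) (M' k j) s z) :
    HasDerivWithinAt (fun t => w t ᵥ* M t) (w' ᵥ* M z + w z ᵥ* M') s z := by
  refine hasDerivWithinAt_pi.2 fun j => ?_
  show HasDerivWithinAt (fun t => ∑ k, w t k * M t k j)
    (∑ k, w' k * M z k j + ∑ k, w z k * M' k j) s z
  rw [← Finset.sum_add_distrib]
  exact .fun_sum fun k _ => (hasDerivWithinAt_pi.1 hw k).mul (hM k j)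

theorem intervalIntegral.integral_vecMul [Fintype κ] {g : ℝ → ι → ℝ} {a b : ℝ}
    (hg : IntervalIntegrable g volume a b) (M : Matrix ι κ ℝ) :
    ∫ x in a..b, g x ᵥ* M = (∫ x in a..b, g x) ᵥ* M :=
  M.vecMulLinear.toContinuousLinearMap.intervalIntegral_comp_comm hg

variable [DecidableEq ι]

theorem Matrix.exp_sub_smul (F : Matrix ι ι ℝ) (a b : ℝ) :
    NormedSpace.exp ((a - b) • F) = NormedSpace.exp (-b • F) * NormedSpace.exp (a • F) := by
  rw [← Matrix.exp_add_of_commute _ _ (((Commute.refl F).smul_left _).smul_right _), ← add_smul,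
    neg_add_eq_sub]

theorem Matrix.exp_neg_smul_mul_exp_smul (F : Matrix ι ι ℝ) (a : ℝ) :
    NormedSpace.exp (-a • F) * NormedSpace.exp (a • F) = 1 := by
  rw [← exp_sub_smul, sub_self, zero_smul, NormedSpace.exp_zero]

theorem HasDerivWithinAt.matrix_exp_smul_apply (F : Matrix ι ι ℝ) {φ : ℝ → ℝ} {φ' z : ℝ}
    {s : Set ℝ} (hφ : HasDerivWithinAt φ φ' s z) (k j : ι) :
    HasDerivWithinAt (fun t => NormedSpace.exp (φ t • F) k j)
      ((φ' • (NormedSpace.exp (φ z • F) * F)) k j) s z := by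
  let := Matrix.linftyOpNormedRing (n := ι) (α := ℝ)
  let := Matrix.linftyOpNormedAlgebra (n := ι) (R := ℝ) (α := ℝ)
  have hexp := (hasDerivAt_exp_smul_const F (φ z)).hasDerivWithinAt (s := univ)
  exact (Matrix.entryLinearMap ℝ ℝ k j).toContinuousLinearMap.hasFDerivAt.comp_hasDerivWithinAt z
    (hexp.scomp z hφ (mapsTo_univ _ _))

end Calculus

section Duhamel

variable {ι κ : Type*} [Fintype ι] [DecidableEq ι]

/-- `ρ` stands for `1/λ` and `φ` for a primitive of `ρ`. -/
noncomputable def duhamel (F : Matrix ι ι ℝ) (ρ φ : ℝ → ℝ) (c : ι → ℝ) (B : ℝ → ι → ℝ)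
    (t₀ t : ℝ) : ι → ℝ :=
  c ᵥ* NormedSpace.exp ((φ t - φ t₀) • F) +
    ∫ ζ in t₀..t, ρ ζ • (B ζ ᵥ* NormedSpace.exp ((φ t - φ ζ) • F))

theorem duhamel_self (F : Matrix ι ι ℝ) (ρ φ : ℝ → ℝ) (c : ι → ℝ) (B : ℝ → ι → ℝ) (t₀ : ℝ) :
    duhamel F ρ φ c B t₀ t₀ = c := by
  simp [duhamel]

theorem hasDerivWithinAt_duhamel {F : Matrix ι ι ℝ} {ρ φ : ℝ → ℝ} {B : ℝ → ι → ℝ}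
    {a b t₀ z : ℝ} (hρ : ContinuousOn ρ (Icc a b))
    (hφ : ∀ t ∈ Icc a b, HasDerivWithinAt φ (ρ t) (Icc a b) t) (hB : ContinuousOn B (Icc a b))
    (c : ι → ℝ) (ht₀ : t₀ ∈ Icc a b) (hz : z ∈ Icc a b) :
    HasDerivWithinAt (duhamel F ρ φ c B t₀)
      (ρ z • (B z + duhamel F ρ φ c B t₀ z ᵥ* F)) (Icc a b) z := by
  set E : ℝ → Matrix ι ι ℝ := fun t => NormedSpace.exp (φ t • F)
  set g : ℝ → ι → ℝ := fun ζ => ρ ζ • (B ζ ᵥ* NormedSpace.exp (-φ ζ • F))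
  have hg : ContinuousOn g (Icc a b) := by
    have hE : ContinuousOn (fun ζ => NormedSpace.exp (-φ ζ • F)) (Icc a b) :=
      continuousOn_pi.2 fun k => continuousOn_pi.2 fun j t ht =>
        ((hφ t ht).neg.matrix_exp_smul_apply F k j).continuousWithinAt
    exact hρ.smul ((continuous_fst.matrix_vecMul continuous_snd).comp_continuousOn (hB.prodMk hE))
  set w : ℝ → ι → ℝ := fun t => c ᵥ* NormedSpace.exp (-φ t₀ • F) + ∫ ζ in t₀..t, g ζ
  have hw : HasDerivWithinAt w (g z) (Icc a b) z :=
    (hg.hasDerivWithinAt_integral_Icc ht₀ hz).const_add _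
  have hrepr : ∀ t ∈ Icc a b, duhamel F ρ φ c B t₀ t = w t ᵥ* E t := by
    intro t ht
    have hint : IntervalIntegrable g volume t₀ t :=
      (hg.mono (uIcc_subset_Icc ht₀ ht)).intervalIntegrable
    simp only [duhamel, w, E, add_vecMul, ← intervalIntegral.integral_vecMul hint, g,
      Matrix.exp_sub_smul, vecMul_vecMul, smul_vecMul]
  have hgE : g z ᵥ* E z = ρ z • B z := by
    simp only [g, E, smul_vecMul, vecMul_vecMul, Matrix.exp_neg_smul_mul_exp_smul, vecMul_one]
  refine (hw.vecMul ((hφ z hz).matrix_exp_smul_apply F)).congr_of_mem hrepr hz |>.congr_deriv ?_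
  rw [hgE, vecMul_smul, ← vecMul_vecMul, ← hrepr z hz, smul_add]

theorem exists_hasDerivWithinAt_diagonal_ode_of_rows_eq_duhamel [Fintype κ] [DecidableEq κ]
    (F : Matrix κ κ ℝ) {lam φ : ι → ℝ → ℝ} {B N : ℝ → Matrix ι κ ℝ} {c : Matrix ι κ ℝ}
    {a b t₀ : ℝ} (hlam : ∀ i, ContinuousOn (lam i) (Icc a b))
    (hlam_ne : ∀ i, ∀ z ∈ Icc a b, lam i z ≠ 0) (hφ : ∀ i z, φ i z = ∫ ζ in t₀..z, 1 / lam i ζ)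
    (hB : ∀ i j, ContinuousOn (fun z => B z i j) (Icc a b))
    (hN : ∀ z i, N z i = duhamel F (fun ζ => 1 / lam i ζ) (φ i) (c i) (fun ζ => B ζ i) t₀ z)
    (ht₀ : t₀ ∈ Icc a b) :
    ∃ N' : ℝ → Matrix ι κ ℝ,
      (∀ z ∈ Icc a b, ∀ i j, HasDerivWithinAt (fun t => N t i j) (N' z i j) (Icc a b) z) ∧
      ∀ z ∈ Icc a b, diagonal (fun i => lam i z) * N' z - N z * F = B z := by
  have hρ : ∀ i, ContinuousOn (fun z => 1 / lam i z) (Icc a b) := fun i =>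
    continuousOn_const.div (hlam i) (hlam_ne i)
  have hφ' : ∀ i, ∀ z ∈ Icc a b, HasDerivWithinAt (φ i) (1 / lam i z) (Icc a b) z :=
    fun i z hz => funext (hφ i) ▸ (hρ i).hasDerivWithinAt_integral_Icc ht₀ hz
  refine ⟨fun z => diagonal (fun i => 1 / lam i z) * (B z + N z * F), fun z hz i j => ?_,
    fun z hz => ?_⟩
  · have hrow : (fun t => N t i) = duhamel F _ _ _ _ t₀ := funext fun t => hN t i
    have := hasDerivWithinAt_pi.1 (hrow ▸ hasDerivWithinAt_duhamel (hρ i) (hφ' i)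
      (continuousOn_pi.2 (hB i)) (c i) ht₀ hz) j
    simpa [← hN, diagonal_mul, mul_apply_eq_vecMul] using this
  · have hinv : (fun i => lam i z * (1 / lam i z)) = fun _ => 1 :=
      funext fun i => mul_one_div_cancel (hlam_ne i z hz)
    rw [← Matrix.mul_assoc, diagonal_mul_diagonal, hinv, diagonal_one, Matrix.one_mul,
      add_sub_cancel_right]

end Duhamel

/-- the explicit matrix function `N_I` built from the row-vector solutions
`ν_iᵀ(z) = −e_iᵀK·Ψ_i(z,0) + ∫₀^z (1/λ_i(ζ))·e_iᵀ(A₁(ζ)K − E₁ᵀG(ζ))·Ψ_i(z,ζ) dζ` (first `p`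
rows) and
`μ_iᵀ(z) = e_iᵀ(C₂ − Q₀K)·Ψ_{i+p}(z,0) + ∫₀^z (1/λ_{i+p}(ζ))·e_iᵀ(A₂(ζ)K − E₂ᵀG(ζ))·Ψ_{i+p}(z,ζ) dζ`
(last `m` rows) solves `Λ(z)·N_I'(z) − N_I(z)·F_c = −A₀(z)·E₁ᵀN_I(0) − G(z)` on `[0,1]` with
`E₁ᵀN_I(0) = −K` and `(E₂ᵀ − Q₀E₁ᵀ)N_I(0) = C₂`. -/
theorem statement11 (p m nxi : ℕ)
    (eps : Fin (p+m) → ℝ → ℝ)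
    (heps : ∀ k, ContDiffOn ℝ 1 (eps k) (Set.Icc 0 1))
    (hpos : ∀ k, ∀ z ∈ Set.Icc (0:ℝ) 1, 0 < eps k z)
    (lam : Fin (p+m) → ℝ → ℝ)
    (hlam : ∀ (k : Fin (p+m)) z, lam k z = if (k:ℕ) < p then eps k z else -eps k z)
    (Λ : ℝ → Matrix (Fin (p+m)) (Fin (p+m)) ℝ)
    (hΛ : ∀ z, Λ z = Matrix.diagonal (fun k => lam k z))
    (E₁ : Matrix (Fin (p+m)) (Fin p) ℝ)
    (hE₁ : ∀ i j, E₁ i j = if (i:ℕ) = (j:ℕ) then 1 else 0)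
    (E₂ : Matrix (Fin (p+m)) (Fin m) ℝ)
    (hE₂ : ∀ i j, E₂ i j = if (i:ℕ) = p + (j:ℕ) then 1 else 0)
    (Fc : Matrix (Fin nxi) (Fin nxi) ℝ)
    (K : Matrix (Fin p) (Fin nxi) ℝ)
    (Q₀ : Matrix (Fin m) (Fin p) ℝ)
    (C₂ : Matrix (Fin m) (Fin nxi) ℝ)
    (A₀ : ℝ → Matrix (Fin (p+m)) (Fin p) ℝ)
    (hA₀ : ∀ i j, ContinuousOn (fun z => A₀ z i j) (Set.Icc 0 1))
    (G : ℝ → Matrix (Fin (p+m)) (Fin nxi) ℝ)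
    (hG : ∀ i j, ContinuousOn (fun z => G z i j) (Set.Icc 0 1))
    (φ : Fin (p+m) → ℝ → ℝ)
    (hφ : ∀ k z, φ k z = ∫ ζ in (0:ℝ)..z, 1 / lam k ζ)
    (Ψ : Fin (p+m) → ℝ → ℝ → Matrix (Fin nxi) (Fin nxi) ℝ)
    (hΨ : ∀ k z ζ, Ψ k z ζ = NormedSpace.exp ((φ k z - φ k ζ) • Fc))
    (A₁ : ℝ → Matrix (Fin p) (Fin p) ℝ) (hA₁ : ∀ z, A₁ z = E₁ᵀ * A₀ z)
    (A₂ : ℝ → Matrix (Fin m) (Fin p) ℝ) (hA₂ : ∀ z, A₂ z = E₂ᵀ * A₀ z)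
    (NI : ℝ → Matrix (Fin (p+m)) (Fin nxi) ℝ)
    (hNI : ∀ z (i : Fin (p+m)) (j : Fin nxi), NI z i j =
      if h : (i:ℕ) < p then
        (-(Matrix.vecMul (fun j' => K ⟨i, h⟩ j') (Ψ i z 0))
          + ∫ ζ in (0:ℝ)..z, (1 / lam i ζ) •
              Matrix.vecMul (fun j' => (A₁ ζ * K - E₁ᵀ * G ζ) ⟨i, h⟩ j') (Ψ i z ζ)) j
      else
        (Matrix.vecMul
            (fun j' => (C₂ - Q₀ * K) ⟨(i:ℕ) - p, by have := i.isLt; omega⟩ j') (Ψ i z 0)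
          + ∫ ζ in (0:ℝ)..z, (1 / lam i ζ) •
              Matrix.vecMul
                (fun j' => (A₂ ζ * K - E₂ᵀ * G ζ) ⟨(i:ℕ) - p, by have := i.isLt; omega⟩ j')
                (Ψ i z ζ)) j) :
    ∃ NI' : ℝ → Matrix (Fin (p+m)) (Fin nxi) ℝ,
      (∀ z ∈ Set.Icc (0:ℝ) 1, ∀ i j,
        HasDerivWithinAt (fun t => NI t i j) (NI' z i j) (Set.Icc 0 1) z) ∧
      (∀ z ∈ Set.Icc (0:ℝ) 1,
        Λ z * NI' z - NI z * Fc = -(A₀ z * (E₁ᵀ * NI 0)) - G z) ∧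
      E₁ᵀ * NI 0 = -K ∧
      (E₂ᵀ - Q₀ * E₁ᵀ) * NI 0 = C₂ := by
  have hlam_cont : ∀ k, ContinuousOn (lam k) (Icc 0 1) := fun k => by
    rw [show lam k = _ from funext (hlam k)]
    by_cases h : (k : ℕ) < p <;> simp only [h, if_true, if_false]
    exacts [(heps k).continuousOn, (heps k).continuousOn.neg]
  have hlam_ne : ∀ k, ∀ z ∈ Icc (0:ℝ) 1, lam k z ≠ 0 := fun k z hz => by
    rw [hlam]; split_ifs <;> simp [(hpos k z hz).ne']
  set B : ℝ → Matrix (Fin (p+m)) (Fin nxi) ℝ := fun z => A₀ z * K - G z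
  have hB : ∀ i j, ContinuousOn (fun z => B z i j) (Icc 0 1) := fun i j => by
    simp only [B, Matrix.sub_apply, mul_apply]
    exact (continuousOn_finsetSum _ fun k _ => (hA₀ i k).mul continuousOn_const).sub (hG i j)
  have hE₁' : ∀ (M : Matrix (Fin (p+m)) (Fin nxi) ℝ) a, (E₁ᵀ * M) a = M (Fin.castAdd m a) :=
    transpose_mul_apply_of_eq_ite fun i j => by simp [hE₁, Fin.ext_iff]
  have hE₂' : ∀ (M : Matrix (Fin (p+m)) (Fin nxi) ℝ) b, (E₂ᵀ * M) b = M (Fin.natAdd p b) :=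
    transpose_mul_apply_of_eq_ite fun i j => by simp [hE₂, Fin.ext_iff]
  have hrow : ∀ z i, NI z i = duhamel Fc (fun ζ => 1 / lam i ζ) (φ i)
      (Fin.append (fun a => -K a) (fun b => (C₂ - Q₀ * K) b) i) (fun ζ => B ζ i) 0 z := by
    intro z i
    ext j
    induction i using Fin.addCases with
    | left a =>
      have hA : ∀ ζ, (A₁ ζ * K - E₁ᵀ * G ζ) a = B ζ (Fin.castAdd m a) := fun ζ => by
        rw [hA₁, Matrix.mul_assoc, ← Matrix.mul_sub, hE₁']
      simp only [hNI, Fin.val_castAdd, Fin.is_lt, dite_true, Fin.eta, hA, hΨ, duhamel,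
        Fin.append_left, neg_vecMul]
    | right b =>
      have hA : ∀ ζ, (A₂ ζ * K - E₂ᵀ * G ζ) b = B ζ (Fin.natAdd p b) := fun ζ => by
        rw [hA₂, Matrix.mul_assoc, ← Matrix.mul_sub, hE₂']
      simp only [hNI, Fin.val_natAdd, show ¬(p + (b : ℕ) < p) by omega, dite_false,
        add_tsub_cancel_left, Fin.eta, hA, hΨ, duhamel, Fin.append_right]
  have hNI0 : NI 0 = Fin.append (fun a => -K a) (fun b => (C₂ - Q₀ * K) b) :=
    funext fun i => (hrow 0 i).trans (duhamel_self ..)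
  have hK : E₁ᵀ * NI 0 = -K := by funext a; rw [hE₁', hNI0, Fin.append_left]; rfl
  have hC₂ : E₂ᵀ * NI 0 = C₂ - Q₀ * K := by funext b; rw [hE₂', hNI0, Fin.append_right]
  obtain ⟨NI', hderiv, hode⟩ := exists_hasDerivWithinAt_diagonal_ode_of_rows_eq_duhamel Fc
    hlam_cont hlam_ne hφ hB hrow (left_mem_Icc.2 zero_le_one)
  refine ⟨NI', hderiv, fun z hz => ?_, hK, ?_⟩
  · rw [hΛ, hode z hz, hK, Matrix.mul_neg, neg_neg]
  · rw [Matrix.sub_mul, Matrix.mul_assoc, hK, hC₂, Matrix.mul_neg, sub_neg_eq_add, sub_add_cancel]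
end

section
/- (Solvability of the ODE-PDE cascade decoupling equations Γ.) Let n = p + m with p, m ≥ 1, let Λ(z) = diag(ε₁(z),…,ε_p(z),−ε_{p+1}(z),…,−ε_n(z)) where each ε_k : [0,1] → ℝ is continuously differentiable with ε_k(z) > 0 on [0,1], and let E₁ = [I_p; 0] ∈ ℝ^{n×p}, E₂ = [0; I_m] ∈ ℝ^{n×m}. Let F ∈ ℝ^{n_ξ×n_ξ}, Q₁ ∈ ℝ^{p×m}, C₂ ∈ ℝ^{m×n_ξ}, let G_o : [0,1] → ℝ^{n×n_ξ} be continuous, and let S : [0,1] → ℝ^{p×n} be continuous such that the p×p block S₁(ζ) = S(ζ)E₁ is strictly upper triangular for every ζ ∈ [0,1]. Then the boundary value problem Λ(z)·Γ'(z) = Γ(z)·F − G_o(z) for z ∈ [0,1], E₂ᵀΓ(0) = C₂, (E₁ᵀ − Q₁E₂ᵀ)Γ(1) = −∫₀¹ S(ζ)·Γ(ζ) dζ has exactly one continuously differentiable solution Γ : [0,1] → ℝ^{n×n_ξ}. -/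
/-!
Row `k` of `Λ Γ' = Γ F - G_o` is the linear ODE `Γ_k' = (±ε_k)⁻¹ (Γ_k F - G_o,k)`, solved by
Duhamel's formula with the propagator `exp ((∫ (±ε_k)⁻¹) • F)` acting on row vectors. The bottom
rows are pinned by `C₂` at `z = 0`; the top rows are parametrised by their values `x` at `z = 1`,
and every solution is of this form. The non-local condition at `z = 1` then becomes
`x + T x = b`, where `T` is a `p × p` block operator with blocks `∫₀¹ S_ij(ζ) exp(…) dζ`. Since
`S₁` is strictly upper triangular so is `T`, hence `1 + T` is injective by back substitution, and
bijective by finite dimensionality: this gives existence and uniqueness.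
-/

open Matrix

/-- A continuously differentiable solution `Γ` of the boundary value problem
`Λ(z)·Γ'(z) = Γ(z)·F − G_o(z)` on `[0,1]`, `E₂ᵀΓ(0) = C₂`,
`(E₁ᵀ − Q₁E₂ᵀ)Γ(1) = −∫₀¹ S(ζ)·Γ(ζ) dζ`. -/
def IsSolGamma (p m nxi : ℕ)
    (Λ : ℝ → Matrix (Fin (p+m)) (Fin (p+m)) ℝ)
    (E₁ : Matrix (Fin (p+m)) (Fin p) ℝ)
    (E₂ : Matrix (Fin (p+m)) (Fin m) ℝ)
    (F : Matrix (Fin nxi) (Fin nxi) ℝ)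
    (Q₁ : Matrix (Fin p) (Fin m) ℝ)
    (C₂ : Matrix (Fin m) (Fin nxi) ℝ)
    (Go : ℝ → Matrix (Fin (p+m)) (Fin nxi) ℝ)
    (S : ℝ → Matrix (Fin p) (Fin (p+m)) ℝ)
    (Γ : ℝ → Matrix (Fin (p+m)) (Fin nxi) ℝ) : Prop :=
  ∃ Γ' : ℝ → Matrix (Fin (p+m)) (Fin nxi) ℝ,
    (∀ i j, ContinuousOn (fun z => Γ' z i j) (Set.Icc 0 1)) ∧
    (∀ z ∈ Set.Icc (0:ℝ) 1, ∀ i j,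
      HasDerivWithinAt (fun t => Γ t i j) (Γ' z i j) (Set.Icc 0 1) z) ∧
    (∀ z ∈ Set.Icc (0:ℝ) 1, Λ z * Γ' z = Γ z * F - Go z) ∧
    E₂ᵀ * Γ 0 = C₂ ∧
    (∀ i j, ((E₁ᵀ - Q₁ * E₂ᵀ) * Γ 1) i j = -∫ ζ in (0:ℝ)..1, (S ζ * Γ ζ) i j)

open NormedSpace Set

namespace CascadeDecoupling

section VariationOfConstants

variable {V : Type*} [NormedAddCommGroup V] [NormedSpace ℝ V] (A : V →L[ℝ] V) {c : ℝ → ℝ}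
  {g : ℝ → V}

noncomputable def propagator (c : ℝ → ℝ) (a z : ℝ) : V →L[ℝ] V :=
  exp ((∫ t in a..z, c t) • A)

noncomputable def duhamel (c : ℝ → ℝ) (g : ℝ → V) (a : ℝ) (v : V) (z : ℝ) : V :=
  propagator A c a z (v - ∫ s in a..z, c s • propagator (-A) c a s (g s))

lemma propagator_self (c : ℝ → ℝ) (a : ℝ) : propagator A c a a = 1 := by
  simp [propagator]

lemma duhamel_self (c : ℝ → ℝ) (g : ℝ → V) (a : ℝ) (v : V) : duhamel A c g a v a = v := by
  simp [duhamel, propagator_self]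

lemma duhamel_eq_propagator_add (c : ℝ → ℝ) (g : ℝ → V) (a : ℝ) (v : V) (z : ℝ) :
    duhamel A c g a v z = propagator A c a z v + duhamel A c g a 0 z := by
  simp [duhamel, sub_eq_add_neg]

variable [CompleteSpace V]

lemma exp_smul_mul_exp_smul_neg (t : ℝ) : exp (t • A) * exp (t • -A) = 1 := by
  have hball : ∀ B : V →L[ℝ] V, B ∈ Metric.eball 0 (expSeries ℝ (V →L[ℝ] V)).radius :=
    fun _ => (expSeries_radius_eq_top ℝ (V →L[ℝ] V)).symm ▸ edist_lt_top _ _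
  rw [smul_neg, ← exp_add_of_commute_of_mem_ball (Commute.refl _).neg_right (hball _) (hball _),
    add_neg_cancel, exp_zero]

lemma propagator_mul_propagator_neg (c : ℝ → ℝ) (a z : ℝ) :
    propagator A c a z * propagator (-A) c a z = 1 :=
  exp_smul_mul_exp_smul_neg A _

lemma hasDerivAt_propagator (hc : Continuous c) (a z : ℝ) :
    HasDerivAt (propagator A c a) (c z • (propagator A c a z * A)) z :=
  (hasDerivAt_exp_smul_const A _).scomp z (hc.integral_hasStrictDerivAt a z).hasDerivAt

lemma continuous_propagator (hc : Continuous c) (a : ℝ) : Continuous (propagator A c a) :=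
  continuous_iff_continuousAt.2 fun z => (hasDerivAt_propagator A hc a z).continuousAt

lemma hasDerivAt_integral_propagator_neg (hc : Continuous c) (hg : Continuous g) (a z : ℝ) :
    HasDerivAt (fun z => ∫ s in a..z, c s • propagator (-A) c a s (g s))
      (c z • propagator (-A) c a z (g z)) z :=
  ((hc.smul ((continuous_propagator (-A) hc a).clm_apply hg)).integral_hasStrictDerivAt
    a z).hasDerivAt

lemma hasDerivAt_duhamel (hc : Continuous c) (hg : Continuous g) (a : ℝ) (v : V) (z : ℝ) :
    HasDerivAt (duhamel A c g a v) (c z • (A (duhamel A c g a v z) - g z)) z := by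
  refine ((hasDerivAt_propagator A hc a z).clm_apply ((hasDerivAt_const z v).sub
    (hasDerivAt_integral_propagator_neg A hc hg a z))).congr_deriv ?_
  have hcomm : propagator A c a z * A = A * propagator A c a z :=
    (((Commute.refl A).smul_right _).exp_right).eq.symm
  rw [_root_.smul_apply, hcomm, zero_sub, map_neg, map_smul,
    ← mul_apply_eq_comp, propagator_mul_propagator_neg]
  simp only [duhamel, mul_apply_eq_comp, one_apply_eq_self]
  module

lemma continuous_duhamel (hc : Continuous c) (hg : Continuous g) (a : ℝ) (v : V) :
    Continuous (duhamel A c g a v) :=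
  continuous_iff_continuousAt.2 fun z => (hasDerivAt_duhamel A hc hg a v z).continuousAt

lemma eq_duhamel_of_hasDerivWithinAt (hc : Continuous c) (hg : Continuous g) {s : Set ℝ}
    (hs : Convex ℝ s) {a : ℝ} (ha : a ∈ s) {η : ℝ → V}
    (hη : ∀ z ∈ s, HasDerivWithinAt η (c z • (A (η z) - g z)) s z) :
    ∀ z ∈ s, η z = duhamel A c g a (η a) z := by
  set I : ℝ → V := fun z => ∫ t in a..z, c t • propagator (-A) c a t (g t)
  -- `propagator (-A) c a z (η z) + I z` is a first integral of the equation
  have hconst : ∀ z ∈ s, HasDerivWithinAt (fun z => propagator (-A) c a z (η z) + I z) 0 s z := by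
    intro z hz
    refine ((((hasDerivAt_propagator (-A) hc a z).hasDerivWithinAt).clm_apply (hη z hz)).add
      (hasDerivAt_integral_propagator_neg A hc hg a z).hasDerivWithinAt).congr_deriv ?_
    simp only [_root_.smul_apply, mul_apply_eq_comp, map_smul, map_sub, _root_.neg_apply,
      map_neg]
    module
  intro z hz
  have key := Convex.norm_image_sub_le_of_norm_hasDerivWithin_le (C := 0) hconst
    (fun _ _ => by simp) hs ha hz
  have hPη : propagator (-A) c a z (η z) = η a - I z := by
    simpa [propagator_self, I, sub_eq_zero, eq_sub_iff_add_eq] using key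
  rw [duhamel, ← hPη, ← mul_apply_eq_comp, propagator_mul_propagator_neg, one_apply_eq_self]

end VariationOfConstants

section StrictlyUpperBlocks

variable {R W ι : Type*} [Ring R] [AddCommGroup W] [Module R W] [Fintype ι]

def blockApply (M : ι → ι → W →ₗ[R] W) : (ι → W) →ₗ[R] (ι → W) :=
  LinearMap.pi fun i => ∑ j, M i j ∘ₗ LinearMap.proj j

lemma blockApply_apply (M : ι → ι → W →ₗ[R] W) (x : ι → W) (i : ι) :
    blockApply M x i = ∑ j, M i j (x j) := by
  simp [blockApply]

lemma injective_one_add_blockApply [LinearOrder ι] {M : ι → ι → W →ₗ[R] W}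
    (hM : ∀ i j, j ≤ i → M i j = 0) :
    Function.Injective ⇑(1 + blockApply M) := by
  rw [← LinearMap.ker_eq_bot, LinearMap.ker_eq_bot']
  intro x hx
  funext i
  induction i using WellFoundedGT.induction with
  | _ i ih =>
    have hi : x i + ∑ j, M i j (x j) = 0 := by
      simpa [blockApply_apply] using congrFun hx i
    rwa [Finset.sum_eq_zero fun j _ => ?_, add_zero] at hi
    rcases le_or_gt j i with hji | hij
    · rw [hM i j hji, LinearMap.zero_apply]
    · rw [ih j hij, Pi.zero_apply, map_zero]

end StrictlyUpperBlocks

section BlockEmbeddings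

def topEmb (R : Type*) [Zero R] [One R] (p m : ℕ) : Matrix (Fin (p+m)) (Fin p) R :=
  of fun i j => if (i:ℕ) = (j:ℕ) then 1 else 0

def bottomEmb (R : Type*) [Zero R] [One R] (p m : ℕ) : Matrix (Fin (p+m)) (Fin m) R :=
  of fun i j => if (i:ℕ) = p + (j:ℕ) then 1 else 0

variable {R : Type*} [Semiring R] {p m : ℕ} {n : Type*}

lemma topEmb_transpose_mul (M : Matrix (Fin (p+m)) n R) :
    (topEmb R p m)ᵀ * M = M.submatrix (Fin.castAdd m) id := by
  have hne : ∀ (i : Fin p) (j : Fin m), p + (j:ℕ) ≠ i := fun i j => by omega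
  ext i l
  simp [topEmb, mul_apply, Fin.sum_univ_add, Fin.val_inj, hne]

lemma bottomEmb_transpose_mul (M : Matrix (Fin (p+m)) n R) :
    (bottomEmb R p m)ᵀ * M = M.submatrix (Fin.natAdd p) id := by
  have hne : ∀ (i : Fin p) (j : Fin m), (i:ℕ) ≠ p + j := fun i j => by omega
  ext i l
  simp [bottomEmb, mul_apply, Fin.sum_univ_add, Fin.val_inj, hne]

lemma mul_topEmb (M : Matrix n (Fin (p+m)) R) :
    M * topEmb R p m = M.submatrix id (Fin.castAdd m) := by
  have hne : ∀ (i : Fin p) (j : Fin m), p + (j:ℕ) ≠ i := fun i j => by omega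
  ext i l
  simp [topEmb, mul_apply, Fin.sum_univ_add, Fin.val_inj, hne]

end BlockEmbeddings

lemma intervalIntegral_eval {ι : Type*} [Fintype ι] {f : ℝ → ι → ℝ} {a b : ℝ}
    (hf : IntervalIntegrable f MeasureTheory.volume a b) (l : ι) :
    ∫ t in a..b, f t l = (∫ t in a..b, f t) l :=
  (ContinuousLinearMap.proj (R := ℝ) (φ := fun _ : ι => ℝ) l).intervalIntegral_comp_comm hf

lemma continuousOn_mul_row {l n o : Type*} [Fintype n] {S : ℝ → Matrix l n ℝ}
    {Γ : ℝ → Matrix n o ℝ} {s : Set ℝ} (hS : ∀ i j, ContinuousOn (fun ζ => S ζ i j) s)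
    (hΓ : ∀ k, ContinuousOn (fun ζ => Γ ζ k) s) (i : l) :
    ContinuousOn (fun ζ => (S ζ * Γ ζ) i) s := by
  simp only [mul_apply_eq_vecMul, vecMul_eq_sum]
  exact continuousOn_finsetSum _ fun k _ => (hS i k).smul (hΓ k)

noncomputable def unitExtend {β : Type*} (f : ℝ → β) : ℝ → β :=
  IccExtend zero_le_one ((Icc (0:ℝ) 1).domRestrict f)

lemma unitExtend_of_mem {β : Type*} (f : ℝ → β) {z : ℝ} (hz : z ∈ Icc (0:ℝ) 1) :
    unitExtend f z = f z :=
  IccExtend_of_mem _ _ hz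

lemma continuous_unitExtend {β : Type*} [TopologicalSpace β] {f : ℝ → β}
    (hf : ContinuousOn f (Icc 0 1)) : Continuous (unitExtend f) :=
  continuous_IccExtend_iff.2 (continuousOn_iff_continuous_domRestrict.1 hf)

noncomputable def vecMulCLM {n : Type*} [Fintype n] (F : Matrix n n ℝ) : (n → ℝ) →L[ℝ] (n → ℝ) :=
  LinearMap.toContinuousLinearMap (vecMulLinear F)

lemma mul_apply_eq_vecMulCLM {l n : Type*} [Fintype n] (M : Matrix l n ℝ) (F : Matrix n n ℝ)
    (k : l) : (M * F) k = vecMulCLM F (M k) :=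
  rfl

noncomputable section Problem

variable {p m nxi : ℕ} (eps : Fin (p+m) → ℝ → ℝ) (F : Matrix (Fin nxi) (Fin nxi) ℝ)
  (Go : ℝ → Matrix (Fin (p+m)) (Fin nxi) ℝ) (S : ℝ → Matrix (Fin p) (Fin (p+m)) ℝ)
  (C₂ : Matrix (Fin m) (Fin nxi) ℝ) (Q₁ : Matrix (Fin p) (Fin m) ℝ)

def lambdaEntry (k : Fin (p+m)) (z : ℝ) : ℝ := if (k:ℕ) < p then eps k z else -eps k z

def lambdaMat (z : ℝ) : Matrix (Fin (p+m)) (Fin (p+m)) ℝ := diagonal fun k => lambdaEntry eps k z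

lemma lambdaEntry_ne_zero (hpos : ∀ k, ∀ z ∈ Icc (0:ℝ) 1, 0 < eps k z) (k : Fin (p+m))
    {z : ℝ} (hz : z ∈ Icc (0:ℝ) 1) : lambdaEntry eps k z ≠ 0 := by
  have := (hpos k z hz).ne'
  unfold lambdaEntry
  split_ifs <;> simpa

def rowCoeff (k : Fin (p+m)) : ℝ → ℝ := unitExtend fun z => (lambdaEntry eps k z)⁻¹

def rowForcing (k : Fin (p+m)) : ℝ → Fin nxi → ℝ := unitExtend fun z => Go z k

lemma continuous_rowCoeff (heps : ∀ k, ContDiffOn ℝ 1 (eps k) (Icc 0 1))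
    (hpos : ∀ k, ∀ z ∈ Icc (0:ℝ) 1, 0 < eps k z) (k : Fin (p+m)) :
    Continuous (rowCoeff eps k) := by
  have hcont : ContinuousOn (lambdaEntry eps k) (Icc 0 1) := by
    unfold lambdaEntry
    split_ifs
    · exact (heps k).continuousOn
    · exact (heps k).continuousOn.neg
  exact continuous_unitExtend (hcont.inv₀ fun z hz => lambdaEntry_ne_zero eps hpos k hz)

lemma continuous_rowForcing (hGo : ∀ i j, ContinuousOn (fun z => Go z i j) (Icc 0 1))
    (k : Fin (p+m)) : Continuous (rowForcing Go k) :=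
  continuous_unitExtend (continuousOn_pi.2 (hGo k))

lemma lambdaMat_mul_eq_iff (hpos : ∀ k, ∀ z ∈ Icc (0:ℝ) 1, 0 < eps k z) {z : ℝ}
    (hz : z ∈ Icc (0:ℝ) 1) (Γ Γ' : Matrix (Fin (p+m)) (Fin nxi) ℝ) :
    lambdaMat eps z * Γ' = Γ * F - Go z ↔
      ∀ k, Γ' k = rowCoeff eps k z • (vecMulCLM F (Γ k) - rowForcing Go k z) := by
  have hrow : ∀ k, (lambdaMat eps z * Γ') k = lambdaEntry eps k z • Γ' k := fun k => by
    ext l; simp [lambdaMat, diagonal_mul]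
  simp only [rowCoeff, rowForcing, unitExtend_of_mem _ hz,
    eq_inv_smul_iff₀ (lambdaEntry_ne_zero eps hpos _ hz), ← mul_apply_eq_vecMulCLM, ← hrow]
  exact funext_iff

def rowBasePoint : Fin (p+m) → ℝ := Fin.append (fun _ => 1) (fun _ => 0)

lemma rowBasePoint_mem (k : Fin (p+m)) : rowBasePoint k ∈ Icc (0:ℝ) 1 := by
  induction k using Fin.addCases <;> simp [rowBasePoint]

def gammaOf (x : Fin p → Fin nxi → ℝ) (z : ℝ) : Matrix (Fin (p+m)) (Fin nxi) ℝ :=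
  of fun k => duhamel (vecMulCLM F) (rowCoeff eps k) (rowForcing Go k) (rowBasePoint k)
    (Fin.append x (fun j => C₂ j) k) z

lemma gammaOf_apply (x : Fin p → Fin nxi → ℝ) (z : ℝ) (k : Fin (p+m)) :
    gammaOf eps F Go C₂ x z k = duhamel (vecMulCLM F) (rowCoeff eps k) (rowForcing Go k)
      (rowBasePoint k) (Fin.append x (fun j => C₂ j) k) z :=
  rfl

lemma gammaOf_castAdd_one (x : Fin p → Fin nxi → ℝ) (i : Fin p) :
    gammaOf eps F Go C₂ x 1 (Fin.castAdd m i) = x i := by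
  simp [gammaOf_apply, rowBasePoint, duhamel_self]

lemma gammaOf_natAdd_zero (x : Fin p → Fin nxi → ℝ) (j : Fin m) :
    gammaOf eps F Go C₂ x 0 (Fin.natAdd p j) = C₂ j := by
  simp [gammaOf_apply, rowBasePoint, duhamel_self]

lemma gammaOf_castAdd (x : Fin p → Fin nxi → ℝ) (z : ℝ) (i : Fin p) :
    gammaOf eps F Go C₂ x z (Fin.castAdd m i) =
      propagator (vecMulCLM F) (rowCoeff eps (Fin.castAdd m i)) 1 z (x i) +
        gammaOf eps F Go C₂ 0 z (Fin.castAdd m i) := by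
  simp [gammaOf_apply, rowBasePoint, duhamel_eq_propagator_add _ _ _ _ (x i)]

lemma gammaOf_natAdd (x : Fin p → Fin nxi → ℝ) (z : ℝ) (j : Fin m) :
    gammaOf eps F Go C₂ x z (Fin.natAdd p j) = gammaOf eps F Go C₂ 0 z (Fin.natAdd p j) := by
  simp [gammaOf_apply]

def couplingOp : (Fin p → Fin nxi → ℝ) →ₗ[ℝ] (Fin p → Fin nxi → ℝ) :=
  blockApply fun i j => ((∫ ζ in (0:ℝ)..1, S ζ i (Fin.castAdd m j) •
    propagator (vecMulCLM F) (rowCoeff eps (Fin.castAdd m j)) 1 ζ :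
      (Fin nxi → ℝ) →L[ℝ] (Fin nxi → ℝ)) : (Fin nxi → ℝ) →ₗ[ℝ] (Fin nxi → ℝ))

def couplingRhs : Fin p → Fin nxi → ℝ := fun i =>
  (Q₁ * (gammaOf eps F Go C₂ 0 1).submatrix (Fin.natAdd p) id) i -
    ∫ ζ in (0:ℝ)..1, (S ζ * gammaOf eps F Go C₂ 0 ζ) i

lemma injective_one_add_couplingOp
    (hS : ∀ ζ ∈ Icc (0:ℝ) 1, ∀ i j : Fin p, j ≤ i → (S ζ * topEmb ℝ p m) i j = 0) :
    Function.Injective ⇑(1 + couplingOp eps F S) := by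
  refine injective_one_add_blockApply fun i j hji => ?_
  rw [intervalIntegral.integral_congr (g := fun _ => 0) fun ζ hζ => ?_,
    intervalIntegral.integral_zero, ContinuousLinearMap.toLinearMap_zero]
  rw [uIcc_of_le zero_le_one] at hζ
  have := hS ζ hζ i j hji
  rw [mul_topEmb, submatrix_apply, id] at this
  simp [this]

section ContinuousCoefficients

variable {eps Go S}

lemma hasDerivAt_gammaOf (hc : ∀ k, Continuous (rowCoeff eps k))
    (hg : ∀ k, Continuous (rowForcing Go k)) (x : Fin p → Fin nxi → ℝ) (k : Fin (p+m)) (z : ℝ) :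
    HasDerivAt (fun z => gammaOf eps F Go C₂ x z k)
      (rowCoeff eps k z • (vecMulCLM F (gammaOf eps F Go C₂ x z k) - rowForcing Go k z)) z :=
  hasDerivAt_duhamel _ (hc k) (hg k) _ _ z

lemma continuous_gammaOf (hc : ∀ k, Continuous (rowCoeff eps k))
    (hg : ∀ k, Continuous (rowForcing Go k)) (x : Fin p → Fin nxi → ℝ) (k : Fin (p+m)) :
    Continuous fun z => gammaOf eps F Go C₂ x z k :=
  continuous_duhamel _ (hc k) (hg k) _ _

lemma eqOn_gammaOf (hc : ∀ k, Continuous (rowCoeff eps k))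
    (hg : ∀ k, Continuous (rowForcing Go k)) {Γ : ℝ → Matrix (Fin (p+m)) (Fin nxi) ℝ}
    (hΓ : ∀ k, ∀ z ∈ Icc (0:ℝ) 1, HasDerivWithinAt (fun t => Γ t k)
      (rowCoeff eps k z • (vecMulCLM F (Γ z k) - rowForcing Go k z)) (Icc 0 1) z)
    (h0 : ∀ j, Γ 0 (Fin.natAdd p j) = C₂ j) :
    EqOn Γ (gammaOf eps F Go C₂ fun i => Γ 1 (Fin.castAdd m i)) (Icc 0 1) := by
  intro z hz
  funext k
  rw [eq_duhamel_of_hasDerivWithinAt _ (hc k) (hg k) (convex_Icc 0 1) (rowBasePoint_mem k)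
    (hΓ k) z hz, gammaOf_apply]
  congr 1
  induction k using Fin.addCases <;> simp [rowBasePoint, h0]

lemma integral_mul_gammaOf (hc : ∀ k, Continuous (rowCoeff eps k))
    (hg : ∀ k, Continuous (rowForcing Go k))
    (hS : ∀ i j, ContinuousOn (fun ζ => S ζ i j) (Icc 0 1)) (x : Fin p → Fin nxi → ℝ)
    (i : Fin p) :
    ∫ ζ in (0:ℝ)..1, (S ζ * gammaOf eps F Go C₂ x ζ) i =
      couplingOp eps F S x i + ∫ ζ in (0:ℝ)..1, (S ζ * gammaOf eps F Go C₂ 0 ζ) i := by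
  set P := fun j : Fin p => propagator (vecMulCLM F) (rowCoeff eps (Fin.castAdd m j)) 1
  have hP : ∀ j, ContinuousOn (fun ζ => S ζ i (Fin.castAdd m j) • P j ζ) (Icc 0 1) := fun j =>
    (hS i _).smul (continuous_propagator _ (hc _) 1).continuousOn
  have hsplit : ∀ ζ, (S ζ * gammaOf eps F Go C₂ x ζ) i =
      ∑ j, (S ζ i (Fin.castAdd m j) • P j ζ) (x j) + (S ζ * gammaOf eps F Go C₂ 0 ζ) i := by
    intro ζ
    simp only [mul_apply_eq_vecMul, vecMul_eq_sum, Fin.sum_univ_add, gammaOf_castAdd _ _ _ _ x,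
      gammaOf_natAdd _ _ _ _ x, smul_add, Finset.sum_add_distrib, _root_.smul_apply, P]
    abel
  rw [intervalIntegral.integral_congr fun ζ _ => hsplit ζ,
    intervalIntegral.integral_add
      (ContinuousOn.intervalIntegrable_of_Icc zero_le_one
        (continuousOn_finsetSum _ fun j _ => (hP j).clm_apply continuousOn_const))
      (ContinuousOn.intervalIntegrable_of_Icc zero_le_one
        (continuousOn_mul_row hS (fun k => (continuous_gammaOf F C₂ hc hg 0 k).continuousOn) i)),
    intervalIntegral.integral_finsetSum fun j _ =>
      ContinuousOn.intervalIntegrable_of_Icc zero_le_one ((hP j).clm_apply continuousOn_const),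
    couplingOp, blockApply_apply]
  congr 1
  refine Finset.sum_congr rfl fun j _ => ?_
  exact (ContinuousLinearMap.intervalIntegral_apply
    ((hP j).intervalIntegrable_of_Icc zero_le_one) (x j)).symm

lemma boundaryCondition_gammaOf_iff (hc : ∀ k, Continuous (rowCoeff eps k))
    (hg : ∀ k, Continuous (rowForcing Go k))
    (hS : ∀ i j, ContinuousOn (fun ζ => S ζ i j) (Icc 0 1)) (x : Fin p → Fin nxi → ℝ) :
    (∀ i j, (((topEmb ℝ p m)ᵀ - Q₁ * (bottomEmb ℝ p m)ᵀ) * gammaOf eps F Go C₂ x 1) i j =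
        -∫ ζ in (0:ℝ)..1, (S ζ * gammaOf eps F Go C₂ x ζ) i j) ↔
      x + couplingOp eps F S x = couplingRhs eps F Go S C₂ Q₁ := by
  have hlhs : ∀ i, (((topEmb ℝ p m)ᵀ - Q₁ * (bottomEmb ℝ p m)ᵀ) * gammaOf eps F Go C₂ x 1) i =
      x i - (Q₁ * (gammaOf eps F Go C₂ 0 1).submatrix (Fin.natAdd p) id) i := by
    intro i
    have hbot : (gammaOf eps F Go C₂ x 1).submatrix (Fin.natAdd p) id =
        (gammaOf eps F Go C₂ 0 1).submatrix (Fin.natAdd p) id := by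
      ext j l
      simp [gammaOf_natAdd _ _ _ _ x]
    rw [Matrix.sub_mul, Matrix.mul_assoc, topEmb_transpose_mul, bottomEmb_transpose_mul, hbot]
    ext l
    simp [gammaOf_castAdd_one]
  have hint : ∀ i l, -∫ ζ in (0:ℝ)..1, (S ζ * gammaOf eps F Go C₂ x ζ) i l =
      (-∫ ζ in (0:ℝ)..1, (S ζ * gammaOf eps F Go C₂ x ζ) i) l := fun i l => by
    rw [Pi.neg_apply, intervalIntegral_eval (ContinuousOn.intervalIntegrable_of_Icc zero_le_one
      (continuousOn_mul_row hS (fun k => (continuous_gammaOf F C₂ hc hg x k).continuousOn) i))]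
  simp only [hint, ← funext_iff, hlhs, integral_mul_gammaOf F C₂ hc hg hS x]
  refine funext_iff.trans ((forall_congr' fun i => ?_).trans funext_iff.symm)
  simp only [couplingRhs, Pi.add_apply]
  constructor <;> intro h <;> linear_combination (norm := module) h

lemma isSolGamma_gammaOf (hpos : ∀ k, ∀ z ∈ Icc (0:ℝ) 1, 0 < eps k z)
    (hc : ∀ k, Continuous (rowCoeff eps k)) (hg : ∀ k, Continuous (rowForcing Go k))
    (hS : ∀ i j, ContinuousOn (fun ζ => S ζ i j) (Icc 0 1)) {x : Fin p → Fin nxi → ℝ}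
    (hx : x + couplingOp eps F S x = couplingRhs eps F Go S C₂ Q₁) :
    IsSolGamma p m nxi (lambdaMat eps) (topEmb ℝ p m) (bottomEmb ℝ p m) F Q₁ C₂ Go S
      (gammaOf eps F Go C₂ x) := by
  refine ⟨fun z => of fun k =>
      rowCoeff eps k z • (vecMulCLM F (gammaOf eps F Go C₂ x z k) - rowForcing Go k z),
    fun k l => ?_, fun z _ k l => ?_, fun z hz => ?_, ?_,
    (boundaryCondition_gammaOf_iff F C₂ Q₁ hc hg hS x).2 hx⟩
  · exact ((continuous_apply l).comp ((hc k).smul (((vecMulCLM F).continuous.comp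
      (continuous_gammaOf F C₂ hc hg x k)).sub (hg k)))).continuousOn
  · exact (hasDerivAt_pi.1 (hasDerivAt_gammaOf F C₂ hc hg x k z) l).hasDerivWithinAt
  · exact (lambdaMat_mul_eq_iff eps F Go hpos hz _ _).2 fun k => rfl
  · ext j l
    simp [bottomEmb_transpose_mul, gammaOf_natAdd_zero]

lemma exists_eqOn_gammaOf (hpos : ∀ k, ∀ z ∈ Icc (0:ℝ) 1, 0 < eps k z)
    (hc : ∀ k, Continuous (rowCoeff eps k)) (hg : ∀ k, Continuous (rowForcing Go k))
    (hS : ∀ i j, ContinuousOn (fun ζ => S ζ i j) (Icc 0 1))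
    {Γ : ℝ → Matrix (Fin (p+m)) (Fin nxi) ℝ}
    (hΓ : IsSolGamma p m nxi (lambdaMat eps) (topEmb ℝ p m) (bottomEmb ℝ p m) F Q₁ C₂ Go S Γ) :
    ∃ y, y + couplingOp eps F S y = couplingRhs eps F Go S C₂ Q₁ ∧
      EqOn Γ (gammaOf eps F Go C₂ y) (Icc 0 1) := by
  obtain ⟨Γ', -, hderiv, hode, hbc0, hbc1⟩ := hΓ
  have hrows : ∀ k, ∀ z ∈ Icc (0:ℝ) 1, HasDerivWithinAt (fun t => Γ t k)
      (rowCoeff eps k z • (vecMulCLM F (Γ z k) - rowForcing Go k z)) (Icc 0 1) z := by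
    intro k z hz
    rw [← (lambdaMat_mul_eq_iff eps F Go hpos hz _ _).1 (hode z hz) k]
    exact hasDerivWithinAt_pi.2 (hderiv z hz k)
  have h0 : ∀ j, Γ 0 (Fin.natAdd p j) = C₂ j := by
    rw [← hbc0, bottomEmb_transpose_mul]
    exact fun j => rfl
  have hEq := eqOn_gammaOf F C₂ hc hg hrows h0
  refine ⟨_, (boundaryCondition_gammaOf_iff F C₂ Q₁ hc hg hS _).1 fun i l => ?_, hEq⟩
  rw [← hEq (right_mem_Icc.2 zero_le_one), hbc1,
    intervalIntegral.integral_congr fun ζ hζ => ?_]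
  rw [uIcc_of_le zero_le_one] at hζ
  simp only [hEq hζ]

end ContinuousCoefficients

end Problem

end CascadeDecoupling

open CascadeDecoupling in
theorem statement12_general (p m nxi : ℕ)
    (eps : Fin (p+m) → ℝ → ℝ)
    (heps : ∀ k, ContDiffOn ℝ 1 (eps k) (Set.Icc 0 1))
    (hpos : ∀ k, ∀ z ∈ Set.Icc (0:ℝ) 1, 0 < eps k z)
    (Λ : ℝ → Matrix (Fin (p+m)) (Fin (p+m)) ℝ)
    (hΛ : ∀ z, Λ z = Matrix.diagonal
      (fun k : Fin (p+m) => if (k:ℕ) < p then eps k z else -eps k z))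
    (E₁ : Matrix (Fin (p+m)) (Fin p) ℝ)
    (hE₁ : ∀ i j, E₁ i j = if (i:ℕ) = (j:ℕ) then 1 else 0)
    (E₂ : Matrix (Fin (p+m)) (Fin m) ℝ)
    (hE₂ : ∀ i j, E₂ i j = if (i:ℕ) = p + (j:ℕ) then 1 else 0)
    (F : Matrix (Fin nxi) (Fin nxi) ℝ)
    (Q₁ : Matrix (Fin p) (Fin m) ℝ)
    (C₂ : Matrix (Fin m) (Fin nxi) ℝ)
    (Go : ℝ → Matrix (Fin (p+m)) (Fin nxi) ℝ)
    (hGo : ∀ i j, ContinuousOn (fun z => Go z i j) (Set.Icc 0 1))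
    (S : ℝ → Matrix (Fin p) (Fin (p+m)) ℝ)
    (hScont : ∀ i j, ContinuousOn (fun ζ => S ζ i j) (Set.Icc 0 1))
    (hStriu : ∀ ζ ∈ Set.Icc (0:ℝ) 1, ∀ i j : Fin p, j ≤ i → (S ζ * E₁) i j = 0) :
    ∃ Γ : ℝ → Matrix (Fin (p+m)) (Fin nxi) ℝ,
      IsSolGamma p m nxi Λ E₁ E₂ F Q₁ C₂ Go S Γ ∧
      ∀ Γ₂ : ℝ → Matrix (Fin (p+m)) (Fin nxi) ℝ,
        IsSolGamma p m nxi Λ E₁ E₂ F Q₁ C₂ Go S Γ₂ →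
        ∀ z ∈ Set.Icc (0:ℝ) 1, Γ₂ z = Γ z := by
  obtain rfl : Λ = lambdaMat eps := funext hΛ
  obtain rfl : E₁ = topEmb ℝ p m := Matrix.ext hE₁
  obtain rfl : E₂ = bottomEmb ℝ p m := Matrix.ext hE₂
  have hc := continuous_rowCoeff eps heps hpos
  have hg := continuous_rowForcing Go hGo
  have hinj := injective_one_add_couplingOp eps F S hStriu
  obtain ⟨x, hx⟩ := LinearMap.injective_iff_surjective.1 hinj (couplingRhs eps F Go S C₂ Q₁)
  refine ⟨gammaOf eps F Go C₂ x, isSolGamma_gammaOf F C₂ Q₁ hpos hc hg hScont hx,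
    fun Γ hΓ z hz => ?_⟩
  obtain ⟨y, hy, hΓy⟩ := exists_eqOn_gammaOf F C₂ Q₁ hpos hc hg hScont hΓ
  rw [hΓy hz, hinj (hy.trans hx.symm)]

/-- solvability (existence and uniqueness of a continuously differentiable
solution) of the ODE-PDE cascade decoupling equations for `Γ`. -/
theorem statement12 (p m nxi : ℕ) (hp : 1 ≤ p) (hm : 1 ≤ m)
    (eps : Fin (p+m) → ℝ → ℝ)
    (heps : ∀ k, ContDiffOn ℝ 1 (eps k) (Set.Icc 0 1))
    (hpos : ∀ k, ∀ z ∈ Set.Icc (0:ℝ) 1, 0 < eps k z)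
    (Λ : ℝ → Matrix (Fin (p+m)) (Fin (p+m)) ℝ)
    (hΛ : ∀ z, Λ z = Matrix.diagonal
      (fun k : Fin (p+m) => if (k:ℕ) < p then eps k z else -eps k z))
    (E₁ : Matrix (Fin (p+m)) (Fin p) ℝ)
    (hE₁ : ∀ i j, E₁ i j = if (i:ℕ) = (j:ℕ) then 1 else 0)
    (E₂ : Matrix (Fin (p+m)) (Fin m) ℝ)
    (hE₂ : ∀ i j, E₂ i j = if (i:ℕ) = p + (j:ℕ) then 1 else 0)
    (F : Matrix (Fin nxi) (Fin nxi) ℝ)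
    (Q₁ : Matrix (Fin p) (Fin m) ℝ)
    (C₂ : Matrix (Fin m) (Fin nxi) ℝ)
    (Go : ℝ → Matrix (Fin (p+m)) (Fin nxi) ℝ)
    (hGo : ∀ i j, ContinuousOn (fun z => Go z i j) (Set.Icc 0 1))
    (S : ℝ → Matrix (Fin p) (Fin (p+m)) ℝ)
    (hScont : ∀ i j, ContinuousOn (fun ζ => S ζ i j) (Set.Icc 0 1))
    (hStriu : ∀ ζ ∈ Set.Icc (0:ℝ) 1, ∀ i j : Fin p, j ≤ i → (S ζ * E₁) i j = 0) :
    ∃ Γ : ℝ → Matrix (Fin (p+m)) (Fin nxi) ℝ,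
      IsSolGamma p m nxi Λ E₁ E₂ F Q₁ C₂ Go S Γ ∧
      ∀ Γ₂ : ℝ → Matrix (Fin (p+m)) (Fin nxi) ℝ,
        IsSolGamma p m nxi Λ E₁ E₂ F Q₁ C₂ Go S Γ₂ →
        ∀ z ∈ Set.Icc (0:ℝ) 1, Γ₂ z = Γ z :=
  statement12_general p m nxi eps heps hpos Λ hΛ E₁ hE₁ E₂ hE₂ F Q₁ C₂ Go hGo S hScont hStriu
end

section
/- (Unique solvability of the eigenvalue-parametrized boundary value problem from the observability proof.) Let n = p + m with p, m ≥ 1, let Λ(z) = diag(ε₁(z),…,ε_p(z),−ε_{p+1}(z),…,−ε_n(z)) where each ε_k : [0,1] → ℝ is continuously differentiable with ε_k(z) > 0 on [0,1], and let E₁ = [I_p; 0] ∈ ℝ^{n×p}, E₂ = [0; I_m] ∈ ℝ^{n×m}. Let μ ∈ ℂ, let g : [0,1] → ℂⁿ be continuous, let c ∈ ℂ^m, let Q₁ ∈ ℝ^{p×m}, and let S : [0,1] → ℝ^{p×n} be continuous such that S(ζ)E₁ is strictly upper triangular for every ζ ∈ [0,1]. Then the boundary value problem γ'(z) = μ·Λ(z)⁻¹·γ(z)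 + g(z) for z ∈ [0,1], E₂ᵀγ(0) = c, (E₁ᵀ − Q₁E₂ᵀ)γ(1) = −∫₀¹ S(ζ)·γ(ζ) dζ has exactly one continuously differentiable solution γ : [0,1] → ℂⁿ. -/
/-!
Since `Λ` is diagonal, the system decouples into scalar equations `γₖ' = (μ / λₖ) γₖ + gₖ`,
whose solutions on `[0,1]` are exactly `γₖ = Xₖ · (γₖ(0) + ∫₀ᶻ Xₖ⁻¹ gₖ)` with
`Xₖ = exp ∫₀ᶻ μ / λₖ`. The condition `E₂ᵀγ(0) = c` fixes the last `m` initial values, and the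
boundary condition at `1` becomes an affine equation `T b + r = 0` in the first `p` initial
values `b`, where `T i j = δᵢⱼ Xᵢ(1) + ∫₀¹ (S E₁)ᵢⱼ Xⱼ`. Strict upper triangularity of `S E₁`
makes `T` upper triangular with diagonal entries `Xᵢ(1) ≠ 0`, so `T` is invertible and `b` is
unique.
-/

open Matrix

/-- A continuously differentiable solution `γ : [0,1] → ℂⁿ` of the eigenvalue-parametrized
boundary value problem `γ'(z) = μ·Λ(z)⁻¹·γ(z) + g(z)`, `E₂ᵀγ(0) = c`,
`(E₁ᵀ − Q₁E₂ᵀ)γ(1) = −∫₀¹ S(ζ)·γ(ζ) dζ`. -/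
def IsSolGammaVec (p m : ℕ)
    (Λ : ℝ → Matrix (Fin (p+m)) (Fin (p+m)) ℝ)
    (E₁ : Matrix (Fin (p+m)) (Fin p) ℝ)
    (E₂ : Matrix (Fin (p+m)) (Fin m) ℝ)
    (μ : ℂ)
    (g : ℝ → (Fin (p+m) → ℂ))
    (c : Fin m → ℂ)
    (Q₁ : Matrix (Fin p) (Fin m) ℝ)
    (S : ℝ → Matrix (Fin p) (Fin (p+m)) ℝ)
    (γ : ℝ → (Fin (p+m) → ℂ)) : Prop :=
  ContinuousOn γ (Set.Icc 0 1) ∧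
  (∀ z ∈ Set.Icc (0:ℝ) 1,
    HasDerivWithinAt γ
      (μ • (((Λ z).map (Complex.ofReal))⁻¹).mulVec (γ z) + g z) (Set.Icc 0 1) z) ∧
  ((E₂.map (Complex.ofReal))ᵀ).mulVec (γ 0) = c ∧
  (∀ i : Fin p,
    (((E₁.map (Complex.ofReal))ᵀ
        - (Q₁.map (Complex.ofReal)) * (E₂.map (Complex.ofReal))ᵀ).mulVec (γ 1)) i
      = -∫ ζ in (0:ℝ)..1, (((S ζ).map (Complex.ofReal)).mulVec (γ ζ)) i)

namespace LinearODE

open intervalIntegral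

noncomputable def fundSol (α : ℝ → ℂ) (z : ℝ) : ℂ := Complex.exp (∫ t in (0:ℝ)..z, α t)

noncomputable def sol (α G : ℝ → ℂ) (a : ℂ) (z : ℝ) : ℂ :=
  fundSol α z * (a + ∫ t in (0:ℝ)..z, (fundSol α t)⁻¹ * G t)

variable {α G : ℝ → ℂ}

lemma fundSol_ne_zero (α : ℝ → ℂ) (z : ℝ) : fundSol α z ≠ 0 := Complex.exp_ne_zero _

@[simp]
lemma fundSol_zero (α : ℝ → ℂ) : fundSol α 0 = 1 := by simp [fundSol]

lemma hasDerivAt_fundSol (hα : Continuous α) (z : ℝ) :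
    HasDerivAt (fundSol α) (α z * fundSol α z) z := by
  rw [mul_comm]
  exact (integral_hasDerivAt_right (hα.intervalIntegrable _ _)
    (hα.stronglyMeasurableAtFilter _ _) hα.continuousAt).cexp

lemma continuous_fundSol (hα : Continuous α) : Continuous (fundSol α) :=
  continuous_iff_continuousAt.2 fun z => (hasDerivAt_fundSol hα z).continuousAt

lemma hasDerivAt_integral_fundSol_inv_mul (hα : Continuous α) (hG : Continuous G) (z : ℝ) :
    HasDerivAt (fun z => ∫ t in (0:ℝ)..z, (fundSol α t)⁻¹ * G t) ((fundSol α z)⁻¹ * G z) z := by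
  have hc : Continuous fun t => (fundSol α t)⁻¹ * G t :=
    ((continuous_fundSol hα).inv₀ (fundSol_ne_zero α)).mul hG
  exact integral_hasDerivAt_right (hc.intervalIntegrable _ _)
    (hc.stronglyMeasurableAtFilter _ _) hc.continuousAt

lemma sol_zero (α G : ℝ → ℂ) (a : ℂ) : sol α G a 0 = a := by
  simp [sol]

lemma sol_add (α G : ℝ → ℂ) (a a' : ℂ) (z : ℝ) :
    sol α G (a + a') z = a * fundSol α z + sol α G a' z := by
  simp only [sol]; ring

lemma hasDerivAt_sol (hα : Continuous α) (hG : Continuous G) (a : ℂ) (z : ℝ) :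
    HasDerivAt (sol α G a) (α z * sol α G a z + G z) z := by
  refine ((hasDerivAt_fundSol hα z).mul
    ((hasDerivAt_integral_fundSol_inv_mul hα hG z).const_add a)).congr_deriv ?_
  rw [mul_inv_cancel_left₀ (fundSol_ne_zero α z), sol]
  ring

lemma continuous_sol (hα : Continuous α) (hG : Continuous G) (a : ℂ) :
    Continuous (sol α G a) :=
  continuous_iff_continuousAt.2 fun z => (hasDerivAt_sol hα hG a z).continuousAt

/-- Uniqueness via the integrating factor: `f / fundSol α - ∫ G / fundSol α` has derivative zero. -/
lemma eqOn_sol {s : Set ℝ} (hs : Convex ℝ s) (h0 : 0 ∈ s) (hα : Continuous α)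
    (hG : Continuous G) {f : ℝ → ℂ}
    (hf : ∀ z ∈ s, HasDerivWithinAt f (α z * f z + G z) s z) :
    Set.EqOn f (sol α G (f 0)) s := by
  set u : ℝ → ℂ := fun z => (fundSol α z)⁻¹ * f z - ∫ t in (0:ℝ)..z, (fundSol α t)⁻¹ * G t
  have hu : ∀ z ∈ s, HasDerivWithinAt u 0 s z := by
    intro z hz
    have hinv := ((hasDerivAt_fundSol hα z).inv (fundSol_ne_zero α z)).hasDerivWithinAt (s := s)
    refine ((hinv.mul (hf z hz)).sub
      (hasDerivAt_integral_fundSol_inv_mul hα hG z).hasDerivWithinAt).congr_deriv ?_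
    rw [Pi.inv_apply]
    field_simp [fundSol_ne_zero α z]
    ring
  intro z hz
  have hconst : u z = u 0 := by
    simpa [sub_eq_zero] using hs.norm_image_sub_le_of_norm_hasDerivWithin_le (C := 0) hu
      (fun _ _ => by simp) h0 hz
  simp only [u, fundSol_zero, inv_one, one_mul, integral_same, sub_zero] at hconst
  rw [sol, ← hconst, sub_add_cancel, mul_inv_cancel_left₀ (fundSol_ne_zero α z)]

end LinearODE

section DiagonalSystem

open Set

variable {ι : Type*}

/-- Extended from `[0,1]` to `ℝ` by constants, so that the scalar theory (coefficients continuous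
on `ℝ`) applies. -/
noncomputable def diagRate (d : ι → ℝ → ℝ) (μ : ℂ) (k : ι) : ℝ → ℂ :=
  IccExtend zero_le_one fun z => μ / d k z

noncomputable def diagForcing (g : ℝ → ι → ℂ) (k : ι) : ℝ → ℂ :=
  IccExtend zero_le_one fun z => g z k

noncomputable def diagSol (d : ι → ℝ → ℝ) (μ : ℂ) (g : ℝ → ι → ℂ) (a : ι → ℂ) (z : ℝ) :
    ι → ℂ :=
  fun k => LinearODE.sol (diagRate d μ k) (diagForcing g k) (a k) z

noncomputable def diagFund (d : ι → ℝ → ℝ) (μ : ℂ) (z : ℝ) : ι → ℂ :=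
  fun k => LinearODE.fundSol (diagRate d μ k) z

variable {d : ι → ℝ → ℝ} {μ : ℂ} {g : ℝ → ι → ℂ}

lemma continuous_diagRate (hd : ∀ k, ContinuousOn (d k) (Icc 0 1))
    (hd0 : ∀ k, ∀ z ∈ Icc (0:ℝ) 1, d k z ≠ 0) (k : ι) : Continuous (diagRate d μ k) :=
  Continuous.Icc_extend' <| continuous_const.div
    (Complex.continuous_ofReal.comp (hd k).domRestrict)
    fun z => Complex.ofReal_ne_zero.2 (hd0 k z z.2)

lemma continuous_diagForcing (hg : ContinuousOn g (Icc 0 1)) (k : ι) :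
    Continuous (diagForcing g k) :=
  Continuous.Icc_extend' <| (continuous_apply k).comp hg.domRestrict

lemma diagSol_zero (d : ι → ℝ → ℝ) (μ : ℂ) (g : ℝ → ι → ℂ) (a : ι → ℂ) :
    diagSol d μ g a 0 = a :=
  funext fun _ => LinearODE.sol_zero _ _ _

lemma diagSol_add (d : ι → ℝ → ℝ) (μ : ℂ) (g : ℝ → ι → ℂ) (a a' : ι → ℂ) (z : ℝ) :
    diagSol d μ g (a + a') z = a * diagFund d μ z + diagSol d μ g a' z :=
  funext fun _ => LinearODE.sol_add _ _ _ _ _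

lemma continuous_diagFund (hd : ∀ k, ContinuousOn (d k) (Icc 0 1))
    (hd0 : ∀ k, ∀ z ∈ Icc (0:ℝ) 1, d k z ≠ 0) : Continuous (diagFund d μ) :=
  continuous_pi fun k => LinearODE.continuous_fundSol (continuous_diagRate hd hd0 k)

lemma continuous_diagSol (hd : ∀ k, ContinuousOn (d k) (Icc 0 1))
    (hd0 : ∀ k, ∀ z ∈ Icc (0:ℝ) 1, d k z ≠ 0) (hg : ContinuousOn g (Icc 0 1)) (a : ι → ℂ) :
    Continuous (diagSol d μ g a) :=
  continuous_pi fun k => LinearODE.continuous_sol (continuous_diagRate hd hd0 k)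
    (continuous_diagForcing hg k) (a k)

variable [Fintype ι] [DecidableEq ι]

lemma smul_inv_diagonal_mulVec_add_apply {Λ : ℝ → Matrix ι ι ℝ}
    (hΛ : ∀ z, Λ z = diagonal fun k => d k z) (hd0 : ∀ k, ∀ z ∈ Icc (0:ℝ) 1, d k z ≠ 0)
    {z : ℝ} (hz : z ∈ Icc (0:ℝ) 1) (v : ι → ℂ) (k : ι) :
    (μ • ((Λ z).map Complex.ofReal)⁻¹ *ᵥ v + g z) k
      = diagRate d μ k z * v k + diagForcing g k z := by
  have hinv : ((Λ z).map Complex.ofReal)⁻¹ = diagonal fun k => (d k z : ℂ)⁻¹ := by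
    rw [hΛ, diagonal_map Complex.ofReal_zero]
    refine inv_eq_left_inv ?_
    rw [diagonal_mul_diagonal, ← diagonal_one]
    exact congrArg diagonal (funext fun k => inv_mul_cancel₀ (by exact_mod_cast hd0 k z hz))
  rw [hinv, diagRate, diagForcing, IccExtend_of_mem _ _ hz, IccExtend_of_mem _ _ hz]
  simp [mulVec_diagonal, div_eq_mul_inv, mul_assoc]

lemma hasDerivWithinAt_diagSol {Λ : ℝ → Matrix ι ι ℝ}
    (hΛ : ∀ z, Λ z = diagonal fun k => d k z) (hd : ∀ k, ContinuousOn (d k) (Icc 0 1))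
    (hd0 : ∀ k, ∀ z ∈ Icc (0:ℝ) 1, d k z ≠ 0) (hg : ContinuousOn g (Icc 0 1)) (a : ι → ℂ) :
    ∀ z ∈ Icc (0:ℝ) 1, HasDerivWithinAt (diagSol d μ g a)
      (μ • ((Λ z).map Complex.ofReal)⁻¹ *ᵥ diagSol d μ g a z + g z) (Icc 0 1) z := by
  intro z hz
  refine hasDerivWithinAt_pi.2 fun k => ?_
  rw [smul_inv_diagonal_mulVec_add_apply hΛ hd0 hz]
  exact (LinearODE.hasDerivAt_sol (continuous_diagRate hd hd0 k)
    (continuous_diagForcing hg k) (a k) z).hasDerivWithinAt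

lemma eqOn_diagSol {Λ : ℝ → Matrix ι ι ℝ}
    (hΛ : ∀ z, Λ z = diagonal fun k => d k z) (hd : ∀ k, ContinuousOn (d k) (Icc 0 1))
    (hd0 : ∀ k, ∀ z ∈ Icc (0:ℝ) 1, d k z ≠ 0) (hg : ContinuousOn g (Icc 0 1))
    {γ : ℝ → ι → ℂ} (hγ : ∀ z ∈ Icc (0:ℝ) 1, HasDerivWithinAt γ
      (μ • ((Λ z).map Complex.ofReal)⁻¹ *ᵥ γ z + g z) (Icc 0 1) z) :
    EqOn γ (diagSol d μ g (γ 0)) (Icc 0 1) := fun z hz =>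
  funext fun k => LinearODE.eqOn_sol (convex_Icc 0 1) (left_mem_Icc.2 zero_le_one)
    (continuous_diagRate hd hd0 k) (continuous_diagForcing hg k)
    (fun z hz => by
      simpa only [smul_inv_diagonal_mulVec_add_apply hΛ hd0 hz]
        using hasDerivWithinAt_pi.1 (hγ z hz) k) hz

end DiagonalSystem

section Selection

variable {R : Type*} [NonAssocSemiring R] {κ ι l : Type*} [Fintype κ] [DecidableEq κ]
  {M : Matrix κ ι R} {e : ι → κ}

lemma transpose_mulVec_of_eq_ite (hM : ∀ k i, M k i = if k = e i then 1 else 0) (v : κ → R) :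
    Mᵀ *ᵥ v = v ∘ e :=
  funext fun i => by simp [mulVec, dotProduct, hM]

lemma mul_apply_of_eq_ite (hM : ∀ k i, M k i = if k = e i then 1 else 0) (A : Matrix l κ R)
    (i : l) (j : ι) : (A * M) i j = A i (e j) := by
  simp [mul_apply, hM]

end Selection

section BoundaryValueProblem

open Set

variable {p m : ℕ} {E₁ : Matrix (Fin (p+m)) (Fin p) ℝ} {E₂ : Matrix (Fin (p+m)) (Fin m) ℝ}
  {Q₁ : Matrix (Fin p) (Fin m) ℝ} {S : ℝ → Matrix (Fin p) (Fin (p+m)) ℝ}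

lemma map_ofReal_eq_ite {ι : Type*} {A : Matrix (Fin (p+m)) ι ℝ} {e : ι → Fin (p+m)}
    (hA : ∀ k i, A k i = if (k:ℕ) = (e i : ℕ) then 1 else 0) (k : Fin (p+m)) (i : ι) :
    A.map Complex.ofReal k i = if k = e i then 1 else 0 := by
  simp [hA, Fin.ext_iff, apply_ite Complex.ofReal]

lemma map_transpose_mulVec_eq_comp_castAdd (hE₁ : ∀ i j, E₁ i j = if (i:ℕ) = (j:ℕ) then 1 else 0)
    (v : Fin (p+m) → ℂ) : (E₁.map Complex.ofReal)ᵀ *ᵥ v = v ∘ Fin.castAdd m :=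
  transpose_mulVec_of_eq_ite (map_ofReal_eq_ite (by simpa using hE₁)) v

lemma map_transpose_mulVec_eq_comp_natAdd
    (hE₂ : ∀ i j, E₂ i j = if (i:ℕ) = p + (j:ℕ) then 1 else 0) (v : Fin (p+m) → ℂ) :
    (E₂.map Complex.ofReal)ᵀ *ᵥ v = v ∘ Fin.natAdd p :=
  transpose_mulVec_of_eq_ite (map_ofReal_eq_ite (by simpa using hE₂)) v

variable (E₁ E₂ Q₁ S) in
noncomputable def bvpResidual (γ : ℝ → Fin (p+m) → ℂ) : Fin p → ℂ :=
  ((E₁.map Complex.ofReal)ᵀ - Q₁.map Complex.ofReal * (E₂.map Complex.ofReal)ᵀ) *ᵥ γ 1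
    + fun i => ∫ ζ in (0:ℝ)..1, ((S ζ).map Complex.ofReal *ᵥ γ ζ) i

variable (S) in
/-- For fundamental solutions `X`, the linear part of `b ↦ bvpResidual` of the solution with
initial value `Fin.append b c`. -/
noncomputable def bvpMatrix (X : ℝ → Fin (p+m) → ℂ) : Matrix (Fin p) (Fin p) ℂ :=
  of fun i j => (if i = j then X 1 (Fin.castAdd m i) else 0)
    + ∫ ζ in (0:ℝ)..1, (S ζ i (Fin.castAdd m j) : ℂ) * X ζ (Fin.castAdd m j)

lemma continuousOn_mulVec_apply {s : Set ℝ} (hS : ∀ i j, ContinuousOn (fun ζ => S ζ i j) s)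
    {γ : ℝ → Fin (p+m) → ℂ} (hγ : ContinuousOn γ s) (i : Fin p) :
    ContinuousOn (fun ζ => ((S ζ).map Complex.ofReal *ᵥ γ ζ) i) s := by
  simp only [mulVec, dotProduct, map_apply]
  exact continuousOn_finsetSum _ fun k _ =>
    (Complex.continuous_ofReal.comp_continuousOn (hS i k)).mul
      ((continuous_apply k).comp_continuousOn hγ)

lemma bvpResidual_congr {γ δ : ℝ → Fin (p+m) → ℂ} (h : EqOn γ δ (Icc 0 1)) :
    bvpResidual E₁ E₂ Q₁ S γ = bvpResidual E₁ E₂ Q₁ S δ := by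
  have hint : ∀ i, ∫ ζ in (0:ℝ)..1, ((S ζ).map Complex.ofReal *ᵥ γ ζ) i
      = ∫ ζ in (0:ℝ)..1, ((S ζ).map Complex.ofReal *ᵥ δ ζ) i := fun i =>
    intervalIntegral.integral_congr fun ζ hζ => by
      rw [uIcc_of_le zero_le_one] at hζ
      simp only [h hζ]
  simp only [bvpResidual, hint, h (right_mem_Icc.2 zero_le_one)]

lemma bvpResidual_add (hS : ∀ i j, ContinuousOn (fun ζ => S ζ i j) (Icc 0 1))
    {γ δ : ℝ → Fin (p+m) → ℂ} (hγ : ContinuousOn γ (Icc 0 1)) (hδ : ContinuousOn δ (Icc 0 1)) :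
    bvpResidual E₁ E₂ Q₁ S (γ + δ) = bvpResidual E₁ E₂ Q₁ S γ + bvpResidual E₁ E₂ Q₁ S δ := by
  have hint : ∀ {η : ℝ → Fin (p+m) → ℂ}, ContinuousOn η (Icc 0 1) → ∀ i,
      IntervalIntegrable (fun ζ => ((S ζ).map Complex.ofReal *ᵥ η ζ) i) MeasureTheory.volume 0 1 :=
    fun hη i => (continuousOn_mulVec_apply hS hη i).intervalIntegrable_of_Icc zero_le_one
  ext i
  simp only [bvpResidual, Pi.add_apply, mulVec_add,
    intervalIntegral.integral_add (hint hγ i) (hint hδ i)]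
  ring

lemma bvpResidual_append_zero_mul (hE₁ : ∀ i j, E₁ i j = if (i:ℕ) = (j:ℕ) then 1 else 0)
    (hE₂ : ∀ i j, E₂ i j = if (i:ℕ) = p + (j:ℕ) then 1 else 0)
    (hS : ∀ i j, ContinuousOn (fun ζ => S ζ i j) (Icc 0 1))
    {X : ℝ → Fin (p+m) → ℂ} (hX : ContinuousOn X (Icc 0 1)) (b : Fin p → ℂ) :
    bvpResidual E₁ E₂ Q₁ S (fun ζ => Fin.append b 0 * X ζ) = bvpMatrix S X *ᵥ b := by
  have hend : ∀ i, (((E₁.map Complex.ofReal)ᵀ - Q₁.map Complex.ofReal * (E₂.map Complex.ofReal)ᵀ)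
      *ᵥ (Fin.append b 0 * X 1)) i = b i * X 1 (Fin.castAdd m i) := fun i => by
    have hlast : (Fin.append b 0 * X 1) ∘ Fin.natAdd p = 0 := funext fun j => by simp
    simp [sub_mulVec, ← mulVec_mulVec, map_transpose_mulVec_eq_comp_castAdd hE₁,
      map_transpose_mulVec_eq_comp_natAdd hE₂, hlast]
  have hint : ∀ ζ i, ((S ζ).map Complex.ofReal *ᵥ (Fin.append b 0 * X ζ)) i
      = ∑ j, b j * ((S ζ i (Fin.castAdd m j) : ℂ) * X ζ (Fin.castAdd m j)) := fun ζ i => by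
    simp only [mulVec, dotProduct, Fin.sum_univ_add, map_apply, Pi.mul_apply, Fin.append_left,
      Fin.append_right, Pi.zero_apply, zero_mul, mul_zero, Finset.sum_const_zero, add_zero]
    exact Finset.sum_congr rfl fun j _ => by ring
  have hSX : ∀ i j, IntervalIntegrable
      (fun ζ => (S ζ i (Fin.castAdd m j) : ℂ) * X ζ (Fin.castAdd m j)) MeasureTheory.volume 0 1 :=
    fun i j => ((Complex.continuous_ofReal.comp_continuousOn (hS i _)).mul
      ((continuous_apply _).comp_continuousOn hX)).intervalIntegrable_of_Icc zero_le_one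
  ext i
  simp only [bvpResidual, Pi.add_apply, hend, hint,
    intervalIntegral.integral_finsetSum fun j _ => (hSX i j).const_mul (b j),
    intervalIntegral.integral_const_mul]
  simp only [bvpMatrix, mulVec, dotProduct, of_apply, add_mul,
    Finset.sum_add_distrib, ite_mul, zero_mul, Finset.sum_ite_eq, Finset.mem_univ, if_true]
  simp only [mul_comm]

lemma bvpMatrix_apply_of_le (hE₁ : ∀ i j, E₁ i j = if (i:ℕ) = (j:ℕ) then 1 else 0)
    (hStriu : ∀ ζ ∈ Icc (0:ℝ) 1, ∀ i j : Fin p, j ≤ i → (S ζ * E₁) i j = 0)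
    (X : ℝ → Fin (p+m) → ℂ) {i j : Fin p} (hji : j ≤ i) :
    bvpMatrix S X i j = (if i = j then X 1 (Fin.castAdd m i) else 0) := by
  have hvanish : EqOn (fun ζ => (S ζ i (Fin.castAdd m j) : ℂ) * X ζ (Fin.castAdd m j)) 0
      (uIcc 0 1) := fun ζ hζ => by
    rw [uIcc_of_le zero_le_one] at hζ
    have h := hStriu ζ hζ i j hji
    rw [mul_apply_of_eq_ite (e := Fin.castAdd m) (by simpa [Fin.ext_iff] using hE₁)] at h
    simp [h]
  simp [bvpMatrix, intervalIntegral.integral_congr hvanish]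

lemma isUnit_bvpMatrix (hE₁ : ∀ i j, E₁ i j = if (i:ℕ) = (j:ℕ) then 1 else 0)
    (hStriu : ∀ ζ ∈ Icc (0:ℝ) 1, ∀ i j : Fin p, j ≤ i → (S ζ * E₁) i j = 0)
    {X : ℝ → Fin (p+m) → ℂ} (hX : ∀ k, X 1 k ≠ 0) : IsUnit (bvpMatrix S X) := by
  have hupper : (bvpMatrix S X).IsUpperTriangular := fun i j (hji : j < i) => by
    rw [bvpMatrix_apply_of_le hE₁ hStriu X hji.le, if_neg (ne_of_lt hji).symm]
  rw [isUnit_iff_isUnit_det, det_of_isUpperTriangular hupper, isUnit_iff_ne_zero,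
    Finset.prod_ne_zero_iff]
  intro i _
  rw [bvpMatrix_apply_of_le hE₁ hStriu X le_rfl, if_pos rfl]
  exact hX _

end BoundaryValueProblem

section EigenvalueBVP

open Set

variable {p m : ℕ} {Λ : ℝ → Matrix (Fin (p+m)) (Fin (p+m)) ℝ} {d : Fin (p+m) → ℝ → ℝ}
  {E₁ : Matrix (Fin (p+m)) (Fin p) ℝ} {E₂ : Matrix (Fin (p+m)) (Fin m) ℝ} {μ : ℂ}
  {g : ℝ → Fin (p+m) → ℂ} {c : Fin m → ℂ} {Q₁ : Matrix (Fin p) (Fin m) ℝ}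
  {S : ℝ → Matrix (Fin p) (Fin (p+m)) ℝ}

lemma boundary_condition_iff {γ : ℝ → Fin (p+m) → ℂ} :
    (∀ i : Fin p, (((E₁.map Complex.ofReal)ᵀ
        - (Q₁.map Complex.ofReal) * (E₂.map Complex.ofReal)ᵀ).mulVec (γ 1)) i
      = -∫ ζ in (0:ℝ)..1, (((S ζ).map Complex.ofReal).mulVec (γ ζ)) i)
      ↔ bvpResidual E₁ E₂ Q₁ S γ = 0 := by
  simp only [funext_iff, bvpResidual, Pi.add_apply, Pi.zero_apply, eq_neg_iff_add_eq_zero]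

lemma bvpResidual_diagSol_append (hd : ∀ k, ContinuousOn (d k) (Icc 0 1))
    (hd0 : ∀ k, ∀ z ∈ Icc (0:ℝ) 1, d k z ≠ 0) (hg : ContinuousOn g (Icc 0 1))
    (hE₁ : ∀ i j, E₁ i j = if (i:ℕ) = (j:ℕ) then 1 else 0)
    (hE₂ : ∀ i j, E₂ i j = if (i:ℕ) = p + (j:ℕ) then 1 else 0)
    (hS : ∀ i j, ContinuousOn (fun ζ => S ζ i j) (Icc 0 1)) (b : Fin p → ℂ) (c : Fin m → ℂ) :
    bvpResidual E₁ E₂ Q₁ S (diagSol d μ g (Fin.append b c))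
      = bvpMatrix S (diagFund d μ) *ᵥ b
        + bvpResidual E₁ E₂ Q₁ S (diagSol d μ g (Fin.append 0 c)) := by
  have hsplit : diagSol d μ g (Fin.append b c)
      = (fun ζ => Fin.append b 0 * diagFund d μ ζ) + diagSol d μ g (Fin.append 0 c) := by
    have happend : Fin.append b c = Fin.append b 0 + Fin.append 0 c := by
      ext k; refine Fin.addCases (fun i => ?_) (fun j => ?_) k <;> simp
    funext ζ
    rw [Pi.add_apply, ← diagSol_add, happend]
  rw [hsplit, bvpResidual_add hS (γ := fun ζ => Fin.append b 0 * diagFund d μ ζ)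
    ((continuous_const.mul (continuous_diagFund hd hd0)).continuousOn)
    (continuous_diagSol hd hd0 hg _).continuousOn,
    bvpResidual_append_zero_mul hE₁ hE₂ hS (continuous_diagFund hd hd0).continuousOn b]

lemma isSolGammaVec_diagSol_append (hΛ : ∀ z, Λ z = diagonal fun k => d k z)
    (hd : ∀ k, ContinuousOn (d k) (Icc 0 1)) (hd0 : ∀ k, ∀ z ∈ Icc (0:ℝ) 1, d k z ≠ 0)
    (hg : ContinuousOn g (Icc 0 1)) (hE₂ : ∀ i j, E₂ i j = if (i:ℕ) = p + (j:ℕ) then 1 else 0)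
    {b : Fin p → ℂ} (hb : bvpResidual E₁ E₂ Q₁ S (diagSol d μ g (Fin.append b c)) = 0) :
    IsSolGammaVec p m Λ E₁ E₂ μ g c Q₁ S (diagSol d μ g (Fin.append b c)) := by
  refine ⟨(continuous_diagSol hd hd0 hg _).continuousOn, hasDerivWithinAt_diagSol hΛ hd hd0 hg _,
    ?_, boundary_condition_iff.2 hb⟩
  rw [diagSol_zero, map_transpose_mulVec_eq_comp_natAdd hE₂]
  exact funext (Fin.append_right b c)

lemma IsSolGammaVec.exists_eqOn_diagSol_append (hΛ : ∀ z, Λ z = diagonal fun k => d k z)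
    (hd : ∀ k, ContinuousOn (d k) (Icc 0 1)) (hd0 : ∀ k, ∀ z ∈ Icc (0:ℝ) 1, d k z ≠ 0)
    (hg : ContinuousOn g (Icc 0 1)) (hE₂ : ∀ i j, E₂ i j = if (i:ℕ) = p + (j:ℕ) then 1 else 0)
    {γ : ℝ → Fin (p+m) → ℂ} (hγ : IsSolGammaVec p m Λ E₁ E₂ μ g c Q₁ S γ) :
    ∃ b, bvpResidual E₁ E₂ Q₁ S (diagSol d μ g (Fin.append b c)) = 0 ∧
      EqOn γ (diagSol d μ g (Fin.append b c)) (Icc 0 1) := by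
  obtain ⟨-, hode, hinit, hbdry⟩ := hγ
  have hγ0 : Fin.append (fun i => γ 0 (Fin.castAdd m i)) c = γ 0 := by
    rw [← hinit, map_transpose_mulVec_eq_comp_natAdd hE₂]
    exact Fin.append_castAdd_natAdd
  have heq := eqOn_diagSol hΛ hd hd0 hg hode
  refine ⟨_, ?_, hγ0 ▸ heq⟩
  rw [hγ0, ← bvpResidual_congr heq]
  exact boundary_condition_iff.1 hbdry

end EigenvalueBVP

theorem statement13_general (p m : ℕ)
    (eps : Fin (p+m) → ℝ → ℝ)
    (heps : ∀ k, ContDiffOn ℝ 1 (eps k) (Set.Icc 0 1))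
    (hpos : ∀ k, ∀ z ∈ Set.Icc (0:ℝ) 1, 0 < eps k z)
    (Λ : ℝ → Matrix (Fin (p+m)) (Fin (p+m)) ℝ)
    (hΛ : ∀ z, Λ z = Matrix.diagonal
      (fun k : Fin (p+m) => if (k:ℕ) < p then eps k z else -eps k z))
    (E₁ : Matrix (Fin (p+m)) (Fin p) ℝ)
    (hE₁ : ∀ i j, E₁ i j = if (i:ℕ) = (j:ℕ) then 1 else 0)
    (E₂ : Matrix (Fin (p+m)) (Fin m) ℝ)
    (hE₂ : ∀ i j, E₂ i j = if (i:ℕ) = p + (j:ℕ) then 1 else 0)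
    (μ : ℂ)
    (g : ℝ → (Fin (p+m) → ℂ))
    (hg : ContinuousOn g (Set.Icc 0 1))
    (c : Fin m → ℂ)
    (Q₁ : Matrix (Fin p) (Fin m) ℝ)
    (S : ℝ → Matrix (Fin p) (Fin (p+m)) ℝ)
    (hScont : ∀ i j, ContinuousOn (fun ζ => S ζ i j) (Set.Icc 0 1))
    (hStriu : ∀ ζ ∈ Set.Icc (0:ℝ) 1, ∀ i j : Fin p, j ≤ i → (S ζ * E₁) i j = 0) :
    ∃ γ : ℝ → (Fin (p+m) → ℂ),
      IsSolGammaVec p m Λ E₁ E₂ μ g c Q₁ S γ ∧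
      ∀ γ₂ : ℝ → (Fin (p+m) → ℂ),
        IsSolGammaVec p m Λ E₁ E₂ μ g c Q₁ S γ₂ →
        ∀ z ∈ Set.Icc (0:ℝ) 1, γ₂ z = γ z := by
  set d : Fin (p+m) → ℝ → ℝ := fun k z => if (k:ℕ) < p then eps k z else -eps k z
  have hd : ∀ k, ContinuousOn (d k) (Set.Icc 0 1) := fun k => by
    by_cases hk : (k:ℕ) < p
    · simpa only [d, hk, if_true] using (heps k).continuousOn
    · simpa only [d, hk, if_false] using (heps k).continuousOn.fun_neg
  have hd0 : ∀ k, ∀ z ∈ Set.Icc (0:ℝ) 1, d k z ≠ 0 := fun k z hz => by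
    have := (hpos k z hz).ne'
    by_cases hk : (k:ℕ) < p <;> simpa [d, hk]
  have hres := bvpResidual_diagSol_append (Q₁ := Q₁) (μ := μ) hd hd0 hg hE₁ hE₂ hScont (c := c)
  have hT : IsUnit (bvpMatrix S (diagFund d μ)) :=
    isUnit_bvpMatrix hE₁ hStriu fun k => LinearODE.fundSol_ne_zero _ _
  obtain ⟨b, hb⟩ := mulVec_surjective_iff_isUnit.2 hT
    (-bvpResidual E₁ E₂ Q₁ S (diagSol d μ g (Fin.append 0 c)))
  refine ⟨diagSol d μ g (Fin.append b c), isSolGammaVec_diagSol_append hΛ hd hd0 hg hE₂ ?_,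
    fun γ hγ z hz => ?_⟩
  · rw [hres, hb, neg_add_cancel]
  obtain ⟨b', hb', hγb'⟩ := hγ.exists_eqOn_diagSol_append hΛ hd hd0 hg hE₂
  rw [hres, add_eq_zero_iff_eq_neg, ← hb] at hb'
  rw [hγb' hz, mulVec_injective_iff_isUnit.2 hT hb']

/-- unique solvability of the eigenvalue-parametrized boundary value problem
from the observability proof. -/
theorem statement13 (p m : ℕ) (hp : 1 ≤ p) (hm : 1 ≤ m)
    (eps : Fin (p+m) → ℝ → ℝ)
    (heps : ∀ k, ContDiffOn ℝ 1 (eps k) (Set.Icc 0 1))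
    (hpos : ∀ k, ∀ z ∈ Set.Icc (0:ℝ) 1, 0 < eps k z)
    (Λ : ℝ → Matrix (Fin (p+m)) (Fin (p+m)) ℝ)
    (hΛ : ∀ z, Λ z = Matrix.diagonal
      (fun k : Fin (p+m) => if (k:ℕ) < p then eps k z else -eps k z))
    (E₁ : Matrix (Fin (p+m)) (Fin p) ℝ)
    (hE₁ : ∀ i j, E₁ i j = if (i:ℕ) = (j:ℕ) then 1 else 0)
    (E₂ : Matrix (Fin (p+m)) (Fin m) ℝ)
    (hE₂ : ∀ i j, E₂ i j = if (i:ℕ) = p + (j:ℕ) then 1 else 0)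
    (μ : ℂ)
    (g : ℝ → (Fin (p+m) → ℂ))
    (hg : ContinuousOn g (Set.Icc 0 1))
    (c : Fin m → ℂ)
    (Q₁ : Matrix (Fin p) (Fin m) ℝ)
    (S : ℝ → Matrix (Fin p) (Fin (p+m)) ℝ)
    (hScont : ∀ i j, ContinuousOn (fun ζ => S ζ i j) (Set.Icc 0 1))
    (hStriu : ∀ ζ ∈ Set.Icc (0:ℝ) 1, ∀ i j : Fin p, j ≤ i → (S ζ * E₁) i j = 0) :
    ∃ γ : ℝ → (Fin (p+m) → ℂ),
      IsSolGammaVec p m Λ E₁ E₂ μ g c Q₁ S γ ∧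
      ∀ γ₂ : ℝ → (Fin (p+m) → ℂ),
        IsSolGammaVec p m Λ E₁ E₂ μ g c Q₁ S γ₂ →
        ∀ z ∈ Set.Icc (0:ℝ) 1, γ₂ z = γ z :=
  statement13_general p m eps heps hpos Λ hΛ E₁ hE₁ E₂ hE₂ μ g hg c Q₁ S hScont hStriu
end
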